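/- arXiv:2505.02145 — 7 statements merged into one kernel-verified Lean document; each statement's English description precedes it below -/
import Mathlib

section
/- Let M, N, G : ℝ × (0,∞) → ℝ be smooth functions with G nowhere vanishing, and let λ, ρ ∈ ℝ. Suppose that for all (x,y) with y > 0: G(x,y)·(∂M/∂x(x,y) − N(x,y)/y) = λ − 2ρ + 1, ∂M/∂y(x,y) + ∂N/∂x(x,y) = 0, and G(x,y)·(∂N/∂y(x,y) − N(x,y)/y) = λ − 2ρ + 1. Then on the upper half-plane one has ∂M/∂x = ∂N/∂y and ∂M/∂y = −∂N/∂x, and consequently M and N are harmonic: ∂²M/∂x² + ∂²M/∂y² = 0 and ∂²N/∂x² + ∂²N/∂y² = 0. -/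
open Set

/-- Partial derivative with respect to the first variable. -/
noncomputable def pdx (f : ℝ → ℝ → ℝ) (x y : ℝ) : ℝ := deriv (fun t => f t y) x

/-- Partial derivative with respect to the second variable. -/
noncomputable def pdy (f : ℝ → ℝ → ℝ) (x y : ℝ) : ℝ := deriv (fun t => f x t) y

section helpers

lemma hasDerivAt_slice_fst (F : ℝ × ℝ → ℝ) {x y : ℝ}
    (hF : DifferentiableAt ℝ F (x, y)) :
    HasDerivAt (fun t => F (t, y)) (fderiv ℝ F (x, y) (1, 0)) x := by
  have h1 : HasDerivAt (fun t : ℝ => (t, y)) ((1 : ℝ), (0 : ℝ)) x :=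
    (hasDerivAt_id x).prodMk (hasDerivAt_const x y)
  exact hF.hasFDerivAt.comp_hasDerivAt x h1

lemma hasDerivAt_slice_snd (F : ℝ × ℝ → ℝ) {x y : ℝ}
    (hF : DifferentiableAt ℝ F (x, y)) :
    HasDerivAt (fun t => F (x, t)) (fderiv ℝ F (x, y) (0, 1)) y := by
  have h1 : HasDerivAt (fun t : ℝ => (x, t)) ((0 : ℝ), (1 : ℝ)) y :=
    (hasDerivAt_const y x).prodMk (hasDerivAt_id y)
  exact hF.hasFDerivAt.comp_hasDerivAt y h1

lemma hasDerivAt_fderiv_fst (F : ℝ × ℝ → ℝ) {x y : ℝ} (w : ℝ × ℝ)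
    (hF : DifferentiableAt ℝ (fderiv ℝ F) (x, y)) :
    HasDerivAt (fun t => fderiv ℝ F (t, y) w)
      (fderiv ℝ (fderiv ℝ F) (x, y) (1, 0) w) x := by
  have h1 : HasDerivAt (fun t : ℝ => (t, y)) ((1 : ℝ), (0 : ℝ)) x :=
    (hasDerivAt_id x).prodMk (hasDerivAt_const x y)
  have h2 : HasDerivAt (fun t => fderiv ℝ F (t, y))
      (fderiv ℝ (fderiv ℝ F) (x, y) (1, 0)) x :=
    hF.hasFDerivAt.comp_hasDerivAt x h1
  simpa using h2.clm_apply (hasDerivAt_const x w)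

lemma hasDerivAt_fderiv_snd (F : ℝ × ℝ → ℝ) {x y : ℝ} (w : ℝ × ℝ)
    (hF : DifferentiableAt ℝ (fderiv ℝ F) (x, y)) :
    HasDerivAt (fun t => fderiv ℝ F (x, t) w)
      (fderiv ℝ (fderiv ℝ F) (x, y) (0, 1) w) y := by
  have h1 : HasDerivAt (fun t : ℝ => (x, t)) ((0 : ℝ), (1 : ℝ)) y :=
    (hasDerivAt_const y x).prodMk (hasDerivAt_id y)
  have h2 : HasDerivAt (fun t => fderiv ℝ F (x, t))
      (fderiv ℝ (fderiv ℝ F) (x, y) (0, 1)) y :=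
    hF.hasFDerivAt.comp_hasDerivAt y h1
  simpa using h2.clm_apply (hasDerivAt_const y w)

variable {f : ℝ → ℝ → ℝ}

lemma contDiffAt_of_upper (hf : ContDiffOn ℝ (⊤ : ℕ∞) (fun p : ℝ × ℝ => f p.1 p.2) {p : ℝ × ℝ | 0 < p.2})
    (x : ℝ) {y : ℝ} (hy : 0 < y) :
    ContDiffAt ℝ (⊤ : ℕ∞) (fun p : ℝ × ℝ => f p.1 p.2) (x, y) := by
  have hU : IsOpen {p : ℝ × ℝ | 0 < p.2} := isOpen_lt continuous_const continuous_snd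
  exact hf.contDiffAt (hU.mem_nhds hy)

lemma pdx_eq (hf : ContDiffOn ℝ (⊤ : ℕ∞) (fun p : ℝ × ℝ => f p.1 p.2) {p : ℝ × ℝ | 0 < p.2})
    (x : ℝ) {y : ℝ} (hy : 0 < y) :
    pdx f x y = fderiv ℝ (fun p : ℝ × ℝ => f p.1 p.2) (x, y) (1, 0) :=
  (hasDerivAt_slice_fst _ ((contDiffAt_of_upper hf x hy).differentiableAt (by simp))).deriv

lemma pdy_eq (hf : ContDiffOn ℝ (⊤ : ℕ∞) (fun p : ℝ × ℝ => f p.1 p.2) {p : ℝ × ℝ | 0 < p.2})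
    (x : ℝ) {y : ℝ} (hy : 0 < y) :
    pdy f x y = fderiv ℝ (fun p : ℝ × ℝ => f p.1 p.2) (x, y) (0, 1) :=
  (hasDerivAt_slice_snd _ ((contDiffAt_of_upper hf x hy).differentiableAt (by simp))).deriv

lemma fderiv_diff (hf : ContDiffOn ℝ (⊤ : ℕ∞) (fun p : ℝ × ℝ => f p.1 p.2) {p : ℝ × ℝ | 0 < p.2})
    (x : ℝ) {y : ℝ} (hy : 0 < y) :
    DifferentiableAt ℝ (fderiv ℝ (fun p : ℝ × ℝ => f p.1 p.2)) (x, y) := by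
  have h := (contDiffAt_of_upper hf x hy).fderiv_right (m := 1) (by exact WithTop.coe_le_coe.mpr le_top)
  exact h.differentiableAt one_ne_zero

lemma pdx_pdy_eq (hf : ContDiffOn ℝ (⊤ : ℕ∞) (fun p : ℝ × ℝ => f p.1 p.2) {p : ℝ × ℝ | 0 < p.2})
    (x : ℝ) {y : ℝ} (hy : 0 < y) :
    pdx (pdy f) x y
      = fderiv ℝ (fderiv ℝ (fun p : ℝ × ℝ => f p.1 p.2)) (x, y) (1, 0) (0, 1) := by
  have heq : (fun t => pdy f t y)
      = fun t => fderiv ℝ (fun p : ℝ × ℝ => f p.1 p.2) (t, y) (0, 1) :=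
    funext fun t => pdy_eq hf t hy
  have := (hasDerivAt_fderiv_fst (fun p : ℝ × ℝ => f p.1 p.2) (0, 1) (fderiv_diff hf x hy)).deriv
  show deriv (fun t => pdy f t y) x = _
  rw [heq, this]

lemma pdy_pdx_eq (hf : ContDiffOn ℝ (⊤ : ℕ∞) (fun p : ℝ × ℝ => f p.1 p.2) {p : ℝ × ℝ | 0 < p.2})
    (x : ℝ) {y : ℝ} (hy : 0 < y) :
    pdy (pdx f) x y
      = fderiv ℝ (fderiv ℝ (fun p : ℝ × ℝ => f p.1 p.2)) (x, y) (0, 1) (1, 0) := by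
  have heq : (fun t => pdx f x t)
      =ᶠ[nhds y] fun t => fderiv ℝ (fun p : ℝ × ℝ => f p.1 p.2) (x, t) (1, 0) := by
    filter_upwards [eventually_gt_nhds hy] with s hs
    exact pdx_eq hf x hs
  have h := (hasDerivAt_fderiv_snd (fun p : ℝ × ℝ => f p.1 p.2) (1, 0) (fderiv_diff hf x hy)).deriv
  show deriv (fun t => pdx f x t) y = _
  rw [heq.deriv_eq, h]

/-- Schwarz symmetry of mixed partial derivatives on the upper half plane. -/
lemma schwarz (hf : ContDiffOn ℝ (⊤ : ℕ∞) (fun p : ℝ × ℝ => f p.1 p.2) {p : ℝ × ℝ | 0 < p.2})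
    (x : ℝ) {y : ℝ} (hy : 0 < y) :
    pdx (pdy f) x y = pdy (pdx f) x y := by
  rw [pdx_pdy_eq hf x hy, pdy_pdx_eq hf x hy]
  exact ((contDiffAt_of_upper hf x hy).isSymmSndFDerivAt (by rw [minSmoothness_of_isRCLikeNormedField]; exact WithTop.coe_le_coe.mpr le_top)) _ _

end helpers

/-- harmonicity part of Theorem 3.1: if `(ℍ², ds², X = M∂x + N∂y, λ, ρ)` is a
`G`-Ricci–Bourguignon soliton, then `M_x = N_y`, `M_y = -N_x`, and `M`, `N` are harmonic. -/
theorem stmt_0 (M N G : ℝ → ℝ → ℝ) (lam rho : ℝ)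
    (hM : ContDiffOn ℝ (⊤ : ℕ∞) (fun p : ℝ × ℝ => M p.1 p.2) {p : ℝ × ℝ | 0 < p.2})
    (hN : ContDiffOn ℝ (⊤ : ℕ∞) (fun p : ℝ × ℝ => N p.1 p.2) {p : ℝ × ℝ | 0 < p.2})
    (hG : ContDiffOn ℝ (⊤ : ℕ∞) (fun p : ℝ × ℝ => G p.1 p.2) {p : ℝ × ℝ | 0 < p.2})
    (hG0 : ∀ x y : ℝ, 0 < y → G x y ≠ 0)
    (h1 : ∀ x y : ℝ, 0 < y → G x y * (pdx M x y - N x y / y) = lam - 2 * rho + 1)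
    (h2 : ∀ x y : ℝ, 0 < y → pdy M x y + pdx N x y = 0)
    (h3 : ∀ x y : ℝ, 0 < y → G x y * (pdy N x y - N x y / y) = lam - 2 * rho + 1) :
    ∀ x y : ℝ, 0 < y →
      pdx M x y = pdy N x y ∧
      pdy M x y = - pdx N x y ∧
      pdx (pdx M) x y + pdy (pdy M) x y = 0 ∧
      pdx (pdx N) x y + pdy (pdy N) x y = 0 := by
  -- Cauchy–Riemann type identities
  have hCR1 : ∀ x y : ℝ, 0 < y → pdx M x y = pdy N x y := by
    intro x y hy
    have h := (h1 x y hy).trans (h3 x y hy).symm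
    have := mul_left_cancel₀ (hG0 x y hy) h
    linarith
  have hCR2 : ∀ x y : ℝ, 0 < y → pdy M x y = - pdx N x y := by
    intro x y hy
    have := h2 x y hy; linarith
  intro x y hy
  refine ⟨hCR1 x y hy, hCR2 x y hy, ?_, ?_⟩
  · -- M is harmonic
    have e1 : pdx (pdx M) x y = pdx (pdy N) x y := by
      show deriv (fun t => pdx M t y) x = deriv (fun t => pdy N t y) x
      congr 1
      exact funext fun t => hCR1 t y hy
    have e2 : pdy (pdy M) x y = - pdy (pdx N) x y := by
      have heq : (fun t => pdy M x t) =ᶠ[nhds y] fun t => - pdx N x t := by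
        filter_upwards [eventually_gt_nhds hy] with s hs
        exact hCR2 x s hs
      show deriv (fun t => pdy M x t) y = _
      rw [heq.deriv_eq]
      exact deriv.neg
    rw [e1, e2, schwarz hN x hy]
    ring
  · -- N is harmonic
    have e1 : pdx (pdx N) x y = - pdx (pdy M) x y := by
      have heq : (fun t => pdx N t y) = fun t => - pdy M t y := by
        funext t
        have := hCR2 t y hy; linarith
      show deriv (fun t => pdx N t y) x = _
      rw [heq]
      exact deriv.neg
    have e2 : pdy (pdy N) x y = pdy (pdx M) x y := by
      have heq : (fun t => pdy N x t) =ᶠ[nhds y] fun t => pdx M x t := by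
        filter_upwards [eventually_gt_nhds hy] with s hs
        exact (hCR1 x s hs).symm
      show deriv (fun t => pdy N x t) y = _
      rw [heq.deriv_eq]; rfl
    rw [e1, e2, schwarz hM x hy]
    ring
end

section
/- Let F, G : ℝ × (0,∞) → ℝ be smooth functions with G nowhere vanishing, and let λ, ρ ∈ ℝ. Suppose that for all (x,y) with y > 0: G(x,y)·(∂²F/∂x²(x,y) − (1/y)·∂F/∂y(x,y)) = (λ − 2ρ + 1)/y², ∂²F/∂x∂y(x,y) + (1/y)·∂F/∂x(x,y) = 0, and G(x,y)·(∂²F/∂y²(x,y) + (1/y)·∂F/∂y(x,y)) = (λ − 2ρ + 1)/y². Then there exist real constants a, a₁, b, c such that for all (x,y) with y > 0: F(x,y) = ((a/2)(x² + y²) + a₁x + b)/y + c, and moreover G(x,y)·((a/2)(x² + y²) + a₁x + b) = (λ − 2ρ + 1)·y. -/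
open Set

open scoped ContDiff

lemma key (f : ℝ → ℝ → ℝ)
    (hf : ContDiffOn ℝ (∞:WithTop ℕ∞) (fun p : ℝ × ℝ => f p.1 p.2) {p : ℝ × ℝ | 0 < p.2}) :
    (∀ x y : ℝ, 0 < y → HasDerivAt (fun t => f t y) (pdx f x y) x) ∧
    (∀ x y : ℝ, 0 < y → HasDerivAt (fun t => f x t) (pdy f x y) y) ∧
    ContDiffOn ℝ (∞:WithTop ℕ∞) (fun p : ℝ × ℝ => pdx f p.1 p.2) {p : ℝ × ℝ | 0 < p.2} ∧
    ContDiffOn ℝ (∞:WithTop ℕ∞) (fun p : ℝ × ℝ => pdy f p.1 p.2) {p : ℝ × ℝ | 0 < p.2} := by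
  set s : Set (ℝ × ℝ) := {p : ℝ × ℝ | 0 < p.2} with hs
  have hsopen : IsOpen s := isOpen_lt continuous_const continuous_snd
  set f2 : ℝ × ℝ → ℝ := fun p => f p.1 p.2 with hf2
  have hd : ∀ p : ℝ × ℝ, p ∈ s → HasFDerivAt f2 (fderiv ℝ f2 p) p := by
    intro p hp
    exact ((hf.contDiffAt (hsopen.mem_nhds hp)).differentiableAt (by norm_num)).hasFDerivAt
  have hderx : ∀ x y : ℝ, 0 < y → HasDerivAt (fun t => f t y) (fderiv ℝ f2 (x, y) (1, 0)) x := by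
    intro x y hy
    have h1 : HasDerivAt (fun t : ℝ => (t, y)) ((1 : ℝ), (0 : ℝ)) x :=
      (hasDerivAt_id x).prodMk (hasDerivAt_const x y)
    exact (hd (x, y) hy).comp_hasDerivAt x h1
  have hdery : ∀ x y : ℝ, 0 < y → HasDerivAt (fun t => f x t) (fderiv ℝ f2 (x, y) (0, 1)) y := by
    intro x y hy
    have h1 : HasDerivAt (fun t : ℝ => (x, t)) ((0 : ℝ), (1 : ℝ)) y :=
      (hasDerivAt_const y x).prodMk (hasDerivAt_id y)
    exact (hd (x, y) hy).comp_hasDerivAt y h1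
  have hpdx : ∀ x y : ℝ, 0 < y → pdx f x y = fderiv ℝ f2 (x, y) (1, 0) := by
    intro x y hy; exact (hderx x y hy).deriv
  have hpdy : ∀ x y : ℝ, 0 < y → pdy f x y = fderiv ℝ f2 (x, y) (0, 1) := by
    intro x y hy; exact (hdery x y hy).deriv
  have hfd : ContDiffOn ℝ (∞:WithTop ℕ∞) (fderiv ℝ f2) s :=
    hf.fderiv_of_isOpen hsopen (by norm_num)
  refine ⟨fun x y hy => (hpdx x y hy) ▸ hderx x y hy,
    fun x y hy => (hpdy x y hy) ▸ hdery x y hy, ?_, ?_⟩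
  · exact (hfd.clm_apply contDiffOn_const).congr (fun p hp => hpdx p.1 p.2 hp)
  · exact (hfd.clm_apply contDiffOn_const).congr (fun p hp => hpdy p.1 p.2 hp)

lemma constIoi (g : ℝ → ℝ) (h : ∀ t : ℝ, 0 < t → HasDerivAt g 0 t) {y : ℝ} (hy : 0 < y) :
    g y = g 1 := by
  refine (convex_Ioi (0:ℝ)).is_const_of_fderivWithin_eq_zero
    (fun t ht => (h t ht).differentiableAt.differentiableWithinAt) ?_ hy (mem_Ioi.2 one_pos)
  intro t ht
  rw [fderivWithin_of_isOpen isOpen_Ioi ht, (h t ht).hasFDerivAt.fderiv]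
  exact ContinuousLinearMap.ext fun u => by simp

lemma constUniv (g : ℝ → ℝ) (h : ∀ t : ℝ, HasDerivAt g 0 t) (x : ℝ) : g x = g 0 :=
  is_const_of_deriv_eq_zero (fun t => (h t).differentiableAt) (fun t => (h t).deriv) x 0

/-- Theorem 3.2: if `(ℍ², ds², ∇F, λ, ρ)` is a gradient `G`-Ricci–Bourguignon
soliton, then `F(x,y) = ((a/2)(x²+y²) + a₁x + b)/y + c` and
`G(x,y)·((a/2)(x²+y²) + a₁x + b) = (λ - 2ρ + 1)y`. -/
theorem stmt_1 (F G : ℝ → ℝ → ℝ) (lam rho : ℝ)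
    (hF : ContDiffOn ℝ (⊤ : ℕ∞) (fun p : ℝ × ℝ => F p.1 p.2) {p : ℝ × ℝ | 0 < p.2})
    (hG : ContDiffOn ℝ (⊤ : ℕ∞) (fun p : ℝ × ℝ => G p.1 p.2) {p : ℝ × ℝ | 0 < p.2})
    (hG0 : ∀ x y : ℝ, 0 < y → G x y ≠ 0)
    (h1 : ∀ x y : ℝ, 0 < y →
      G x y * (pdx (pdx F) x y - (1 / y) * pdy F x y) = (lam - 2 * rho + 1) / y ^ 2)
    (h2 : ∀ x y : ℝ, 0 < y → pdy (pdx F) x y + (1 / y) * pdx F x y = 0)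
    (h3 : ∀ x y : ℝ, 0 < y →
      G x y * (pdy (pdy F) x y + (1 / y) * pdy F x y) = (lam - 2 * rho + 1) / y ^ 2) :
    ∃ a a₁ b c : ℝ,
      (∀ x y : ℝ, 0 < y → F x y = (a / 2 * (x ^ 2 + y ^ 2) + a₁ * x + b) / y + c) ∧
      (∀ x y : ℝ, 0 < y →
        G x y * (a / 2 * (x ^ 2 + y ^ 2) + a₁ * x + b) = (lam - 2 * rho + 1) * y) := by
  obtain ⟨D1, D2, hpdxS, hpdyS⟩ := key F (hF.of_le (by simp))
  obtain ⟨D4, D3, -, -⟩ := key (pdx F) hpdxS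
  obtain ⟨-, D5, -, -⟩ := key (pdy F) hpdyS
  have hS1 : ∀ x y : ℝ, 0 < y → pdx F x y = pdx F x 1 / y := by
    intro x y hy
    have hc : ∀ t : ℝ, 0 < t → HasDerivAt (fun u => u * pdx F x u) 0 t := by
      intro t ht
      convert (hasDerivAt_id t).mul (D3 x t ht) using 1
      · rfl
      · rfl
      · rfl
      have he := h2 x t ht
      have ht' : (t:ℝ) ≠ 0 := ht.ne'
      field_simp at he
      simp only [id_eq]
      linear_combination -he
    have hthis := constIoi (fun u => u * pdx F x u) hc hy
    simp only [one_mul] at hthis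
    field_simp
    linear_combination hthis
  have hS2 : ∀ x y : ℝ, 0 < y → F x y = (F x 1 - F 0 1) / y + F 0 y := by
    intro x y hy
    have hc : ∀ t : ℝ, HasDerivAt (fun u => F u y - (F u 1 - F 0 1) / y) 0 t := by
      intro t
      convert (D1 t y hy).sub (((D1 t 1 one_pos).sub_const (F 0 1)).div_const y) using 1
      · rfl
      · rfl
      · rfl
      rw [hS1 t y hy]; ring
    have hthis := constUniv (fun u => F u y - (F u 1 - F 0 1) / y) hc x
    simp only [sub_self, zero_div, sub_zero] at hthis
    linarith [hthis]
  have hS3 : ∀ x y : ℝ, 0 < y → pdy F x y = -(F x 1 - F 0 1) / y ^ 2 + pdy F 0 y := by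
    intro x y hy
    have hy' : (y:ℝ) ≠ 0 := hy.ne'
    have hder : HasDerivAt (fun t => (F x 1 - F 0 1) / t + F 0 t)
        (-(F x 1 - F 0 1) / y ^ 2 + pdy F 0 y) y := by
      refine HasDerivAt.add ?_ (D2 0 y hy)
      simp only [div_eq_mul_inv]
      convert (hasDerivAt_inv hy').const_mul (F x 1 - F 0 1) using 1
      · rfl
      · rfl
      ring
    have hev : (fun t => F x t) =ᶠ[nhds y] (fun t => (F x 1 - F 0 1) / t + F 0 t) := by
      filter_upwards [Ioi_mem_nhds hy] with t ht
      exact hS2 x t ht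
    exact (hder.congr_of_eventuallyEq hev).deriv
  have hS4 : ∀ x y : ℝ, 0 < y →
      pdy (pdy F) x y = 2 * (F x 1 - F 0 1) / y ^ 3 + pdy (pdy F) 0 y := by
    intro x y hy
    have hy' : (y:ℝ) ≠ 0 := hy.ne'
    have hder : HasDerivAt (fun t => -(F x 1 - F 0 1) / t ^ 2 + pdy F 0 t)
        (2 * (F x 1 - F 0 1) / y ^ 3 + pdy (pdy F) 0 y) y := by
      refine HasDerivAt.add ?_ (D5 0 y hy)
      have hp : HasDerivAt (fun t : ℝ => t ^ 2) (2 * y) y := by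
        simpa using hasDerivAt_pow 2 y
      simp only [div_eq_mul_inv]
      convert (hp.inv (pow_ne_zero 2 hy')).const_mul (-(F x 1 - F 0 1)) using 1
      · rfl
      · rfl
      field_simp
    have hev : (fun t => pdy F x t) =ᶠ[nhds y]
        (fun t => -(F x 1 - F 0 1) / t ^ 2 + pdy F 0 t) := by
      filter_upwards [Ioi_mem_nhds hy] with t ht
      exact hS3 x t ht
    exact (hder.congr_of_eventuallyEq hev).deriv
  have hS5 : ∀ x y : ℝ, 0 < y → pdx (pdx F) x y = pdx (pdx F) x 1 / y := by
    intro x y hy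
    have hfun : (fun t => pdx F t y) = fun t => pdx F t 1 / y := by
      funext t; exact hS1 t y hy
    have hder : HasDerivAt (fun t => pdx F t 1 / y) (pdx (pdx F) x 1 / y) x :=
      (D4 x 1 one_pos).div_const y
    rw [show pdx (pdx F) x y = deriv (fun t => pdx F t y) x from rfl, hfun]
    exact hder.deriv
  have hS6 : ∀ x y : ℝ, 0 < y →
      pdx (pdx F) x y - (1 / y) * pdy F x y = pdy (pdy F) x y + (1 / y) * pdy F x y := by
    intro x y hy
    exact mul_left_cancel₀ (hG0 x y hy) ((h1 x y hy).trans (h3 x y hy).symm)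
  have hS7 : ∀ x y : ℝ, 0 < y →
      pdx (pdx F) x 1 = y * pdy (pdy F) 0 y + 2 * pdy F 0 y := by
    intro x y hy
    have hy' : (y:ℝ) ≠ 0 := hy.ne'
    have h := hS6 x y hy
    rw [hS5 x y hy, hS3 x y hy, hS4 x y hy] at h
    field_simp at h
    have h9 : pdx (pdx F) x 1 * y ^ 9
        = (y * pdy (pdy F) 0 y + 2 * pdy F 0 y) * y ^ 9 := by linear_combination y ^ 7 * h
    exact mul_right_cancel₀ (pow_ne_zero 9 hy') h9
  set a : ℝ := pdx (pdx F) 0 1 with ha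
  have hS7' : ∀ x : ℝ, pdx (pdx F) x 1 = a := by
    intro x
    rw [hS7 x 1 one_pos, ha, hS7 0 1 one_pos]
  have hS7'' : ∀ y : ℝ, 0 < y → y * pdy (pdy F) 0 y + 2 * pdy F 0 y = a := by
    intro y hy
    rw [← hS7 0 y hy, ha]
  set a₁ : ℝ := pdx F 0 1 with ha₁
  have hS8 : ∀ x : ℝ, pdx F x 1 = a * x + a₁ := by
    intro x
    have hc : ∀ t : ℝ, HasDerivAt (fun u => pdx F u 1 - a * u) 0 t := by
      intro t
      convert (D4 t 1 one_pos).sub ((hasDerivAt_id t).const_mul a) using 1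
      · rfl
      · rfl
      · rfl
      rw [hS7' t]; ring
    have hthis := constUniv (fun u => pdx F u 1 - a * u) hc x
    simp only [mul_zero, sub_zero] at hthis
    rw [ha₁]; linarith [hthis]
  have hS9 : ∀ x : ℝ, F x 1 - F 0 1 = a / 2 * x ^ 2 + a₁ * x := by
    intro x
    have hc : ∀ t : ℝ, HasDerivAt (fun u => F u 1 - (a / 2 * u ^ 2 + a₁ * u)) 0 t := by
      intro t
      have hu : HasDerivAt (fun u : ℝ => u ^ 2) (2 * t) t := by
        simpa using hasDerivAt_pow 2 t
      convert (D1 t 1 one_pos).sub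
        ((hu.const_mul (a / 2)).add ((hasDerivAt_id t).const_mul a₁)) using 1
      · rfl
      · rfl
      · rfl
      rw [hS8 t]; simp [id_eq]; ring
    have hthis := constUniv (fun u => F u 1 - (a / 2 * u ^ 2 + a₁ * u)) hc x
    simp only [ne_eq, OfNat.ofNat_ne_zero, not_false_eq_true, zero_pow, mul_zero, add_zero,
      sub_zero] at hthis
    linarith [hthis]
  set C : ℝ := pdy F 0 1 - a / 2 with hC
  have hS10 : ∀ y : ℝ, 0 < y → pdy F 0 y = a / 2 + C / y ^ 2 := by
    intro y hy
    have hy' : (y:ℝ) ≠ 0 := hy.ne'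
    have hc : ∀ t : ℝ, 0 < t →
        HasDerivAt (fun u => u ^ 2 * pdy F 0 u - a / 2 * u ^ 2) 0 t := by
      intro t ht
      have hu : HasDerivAt (fun u : ℝ => u ^ 2) (2 * t) t := by
        simpa using hasDerivAt_pow 2 t
      convert (hu.mul (D5 0 t ht)).sub (hu.const_mul (a / 2)) using 1
      · rfl
      · rfl
      · rfl
      linear_combination -t * hS7'' t ht
    have hthis := constIoi (fun u => u ^ 2 * pdy F 0 u - a / 2 * u ^ 2) hc hy
    simp only [one_pow, one_mul, mul_one] at hthis
    rw [hC, add_div' _ _ _ (pow_ne_zero 2 hy'), eq_div_iff (pow_ne_zero 2 hy')]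
    linear_combination hthis
  set c : ℝ := F 0 1 - a / 2 + C with hc0
  have hS11 : ∀ y : ℝ, 0 < y → F 0 y = a / 2 * y - C / y + c := by
    intro y hy
    have hy' : (y:ℝ) ≠ 0 := hy.ne'
    have hder : ∀ t : ℝ, 0 < t →
        HasDerivAt (fun u => F 0 u - a / 2 * u + C / u) 0 t := by
      intro t ht
      have ht' : (t:ℝ) ≠ 0 := ht.ne'
      have h₁ : HasDerivAt (fun u : ℝ => C / u) (C * -(t ^ 2)⁻¹) t := by
        simp only [div_eq_mul_inv]
        exact (hasDerivAt_inv ht').const_mul C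
      convert ((D2 0 t ht).sub ((hasDerivAt_id t).const_mul (a / 2))).add h₁ using 1
      · rfl
      · rfl
      · rfl
      rw [hS10 t ht]
      simp only [div_eq_mul_inv, id_eq]
      ring
    have hthis := constIoi (fun u => F 0 u - a / 2 * u + C / u) hder hy
    simp only [mul_one, div_one] at hthis
    rw [hc0]
    linear_combination hthis
  refine ⟨a, a₁, -C, c, ?_, ?_⟩
  · intro x y hy
    have hy' : (y:ℝ) ≠ 0 := hy.ne'
    rw [hS2 x y hy, hS9 x, hS11 y hy]
    field_simp
    ring
  · intro x y hy
    have hy' : (y:ℝ) ≠ 0 := hy.ne'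
    have hpsi2 : pdy (pdy F) 0 y = -2 * C / y ^ 3 := by
      have hp : HasDerivAt (fun t : ℝ => t ^ 2) (2 * y) y := by
        simpa using hasDerivAt_pow 2 y
      have hder : HasDerivAt (fun t : ℝ => a / 2 + C / t ^ 2) (-2 * C / y ^ 3) y := by
        simp only [div_eq_mul_inv]
        convert ((hp.inv (pow_ne_zero 2 hy')).const_mul C).const_add (a / 2) using 1
        · rfl
        · rfl
        · rfl
        field_simp
      have hev : (fun t => pdy F 0 t) =ᶠ[nhds y] (fun t : ℝ => a / 2 + C / t ^ 2) := by
        filter_upwards [Ioi_mem_nhds hy] with t ht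
        exact hS10 t ht
      exact (hder.congr_of_eventuallyEq hev).deriv
    have h := h3 x y hy
    have hval : pdy (pdy F) x y + (1 / y) * pdy F x y
        = (a / 2 * (x ^ 2 + y ^ 2) + a₁ * x + -C) / y ^ 3 := by
      rw [hS4 x y hy, hS3 x y hy, hpsi2, hS10 y hy, hS9 x]
      field_simp
      ring
    rw [hval] at h
    have hkey : G x y * (a / 2 * (x ^ 2 + y ^ 2) + a₁ * x + -C)
        = (G x y * ((a / 2 * (x ^ 2 + y ^ 2) + a₁ * x + -C) / y ^ 3)) * y ^ 3 := by
      field_simp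
    rw [hkey, h]
    field_simp
end

section
/- Let M, N : ℝ × (0,∞) → ℝ be smooth functions, not both constant, and let λ, ρ ∈ ℝ. Suppose that for all (x,y) with y > 0: ∂M/∂x(x,y) − N(x,y)/y = λ − 2ρ + 1, ∂M/∂y(x,y) + ∂N/∂x(x,y) = 0, and ∂N/∂y(x,y) − N(x,y)/y = λ − 2ρ + 1. Then λ = 2ρ − 1 (so the vector field X = M∂x + N∂y is Killing), and there exist real constants a, b, c such that for all (x,y) with y > 0: M(x,y) = (a/2)(x² − y²) + bx + c and N(x,y) = axy + by. -/
open Set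

/-- A function on `(0,∞)` with zero derivative is constant. -/
lemma const_of_hasDerivAt_zero_Ioi {φ : ℝ → ℝ}
    (h : ∀ y ∈ Ioi (0:ℝ), HasDerivAt φ 0 y) {y : ℝ} (hy : y ∈ Ioi (0:ℝ)) : φ y = φ 1 := by
  have hb := (convex_Ioi (0:ℝ)).norm_image_sub_le_of_norm_hasDerivWithin_le
    (C := 0) (f' := fun _ => (0:ℝ)) (fun z hz => (h z hz).hasDerivWithinAt)
    (fun z _ => by simp) hy (mem_Ioi.mpr one_pos)
  have : ‖φ 1 - φ y‖ ≤ 0 := by simpa using hb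
  have := norm_le_zero_iff.mp this
  linarith [sub_eq_zero.mp this]

/-- A function on `ℝ` with zero derivative is constant. -/
lemma const_of_hasDerivAt_zero {φ : ℝ → ℝ}
    (h : ∀ y : ℝ, HasDerivAt φ 0 y) (y : ℝ) : φ y = φ 0 := by
  have hdiff : Differentiable ℝ φ := fun z => (h z).differentiableAt
  have hz : ∀ z, deriv φ z = 0 := fun z => (h z).deriv
  exact is_const_of_deriv_eq_zero hdiff hz y 0

/-- Corollary 3.4: a non-constant vector field making `(ℍ², ds², X, λ, ρ)` a
Ricci–Bourguignon soliton forces `λ = 2ρ - 1` (so `X` is Killing), and `X` has the stated form. -/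
theorem stmt_2 (M N : ℝ → ℝ → ℝ) (lam rho : ℝ)
    (hM : ContDiffOn ℝ (⊤ : ℕ∞) (fun p : ℝ × ℝ => M p.1 p.2) {p : ℝ × ℝ | 0 < p.2})
    (hN : ContDiffOn ℝ (⊤ : ℕ∞) (fun p : ℝ × ℝ => N p.1 p.2) {p : ℝ × ℝ | 0 < p.2})
    (hnc : ¬ ∃ cM cN : ℝ, ∀ x y : ℝ, 0 < y → M x y = cM ∧ N x y = cN)
    (h1 : ∀ x y : ℝ, 0 < y → pdx M x y - N x y / y = lam - 2 * rho + 1)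
    (h2 : ∀ x y : ℝ, 0 < y → pdy M x y + pdx N x y = 0)
    (h3 : ∀ x y : ℝ, 0 < y → pdy N x y - N x y / y = lam - 2 * rho + 1) :
    lam = 2 * rho - 1 ∧
    ∃ a b c : ℝ, ∀ x y : ℝ, 0 < y →
      M x y = a / 2 * (x ^ 2 - y ^ 2) + b * x + c ∧ N x y = a * x * y + b * y := by
  have hSopen : IsOpen {p : ℝ × ℝ | 0 < p.2} := isOpen_lt continuous_const continuous_snd
  set k : ℝ := lam - 2 * rho + 1 with hk
  -- differentiability of slices
  have sliceY : ∀ (F : ℝ → ℝ → ℝ), ContDiffOn ℝ (⊤ : ℕ∞) (fun p : ℝ × ℝ => F p.1 p.2)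
      {p : ℝ × ℝ | 0 < p.2} → ∀ x y : ℝ, 0 < y → DifferentiableAt ℝ (fun t => F x t) y := by
    intro F hF x y hy
    have h2 : DifferentiableAt ℝ (fun p : ℝ × ℝ => F p.1 p.2) (x, y) :=
      (hF.contDiffAt (hSopen.mem_nhds hy)).differentiableAt (by simp)
    exact h2.comp y (DifferentiableAt.prodMk (differentiableAt_const x) differentiableAt_id)
  -- smoothness of horizontal slices at height 1
  have sliceX1 : ∀ (F : ℝ → ℝ → ℝ), ContDiffOn ℝ (⊤ : ℕ∞) (fun p : ℝ × ℝ => F p.1 p.2)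
      {p : ℝ × ℝ | 0 < p.2} → ContDiff ℝ (⊤ : ℕ∞) (fun t => F t 1) := by
    intro F hF
    have hcurve : ContDiff ℝ (⊤ : ℕ∞) (fun t : ℝ => (t, (1:ℝ))) := contDiff_id.prodMk contDiff_const
    have := hF.comp (s := (univ : Set ℝ)) hcurve.contDiffOn
      (fun t _ => show (0:ℝ) < 1 by norm_num)
    exact contDiffOn_univ.mp this
  set f : ℝ → ℝ := fun x => N x 1 with hfdef
  set g : ℝ → ℝ := fun x => M x 1 with hgdef
  have hfC : ContDiff ℝ (⊤ : ℕ∞) f := sliceX1 N hN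
  have hgC : ContDiff ℝ (⊤ : ℕ∞) g := sliceX1 M hM
  have hfdiff : Differentiable ℝ f := hfC.differentiable (by simp)
  have hgdiff : Differentiable ℝ g := hgC.differentiable (by simp)
  have hf'C : ContDiff ℝ ((⊤:ℕ∞) : WithTop ℕ∞) (deriv f) := (contDiff_infty_iff_deriv.mp (hfC.of_le (by simp))).2
  have hf'diff : Differentiable ℝ (deriv f) := hf'C.differentiable (by simp)
  -- Step 1: N x y = k * (y * log y) + y * f x
  have hNform : ∀ x y : ℝ, 0 < y → N x y = k * (y * Real.log y) + y * f x := by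
    intro x y hy
    have key : ∀ z ∈ Ioi (0:ℝ),
        HasDerivAt (fun s => N x s / s - k * Real.log s) 0 z := by
      intro z hz
      have hz0 : (0:ℝ) < z := hz
      have hd1 : HasDerivAt (fun t => N x t) (pdy N x z) z := (sliceY N hN x z hz0).hasDerivAt
      have hdiv : HasDerivAt (fun s => N x s / s)
          ((pdy N x z * z - N x z * 1) / z ^ 2) z :=
        hd1.div (hasDerivAt_id z) (ne_of_gt hz0)
      have hlog : HasDerivAt (fun s => k * Real.log s) (k * z⁻¹) z :=
        (Real.hasDerivAt_log (ne_of_gt hz0)).const_mul k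
      have hφ := hdiv.sub hlog
      have hpdy : pdy N x z = N x z / z + k := by have := h3 x z hz0; linarith
      have hval : (pdy N x z * z - N x z * 1) / z ^ 2 - k * z⁻¹ = 0 := by
        rw [hpdy]; field_simp; ring
      rwa [hval] at hφ
    have hconst := const_of_hasDerivAt_zero_Ioi key (mem_Ioi.mpr hy)
    simp only [Real.log_one, div_one, mul_zero, sub_zero] at hconst
    have : N x y / y = k * Real.log y + f x := by
      rw [hfdef]; simp only []; linarith
    have := (div_eq_iff (ne_of_gt hy)).mp this
    rw [this]; ring
  -- Step 2: pdx N x y = y * deriv f x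
  have hNx : ∀ x y : ℝ, 0 < y → pdx N x y = y * deriv f x := by
    intro x y hy
    have hfun : (fun t => N t y) = fun t => k * (y * Real.log y) + y * f t :=
      funext fun t => hNform t y hy
    have hdf : HasDerivAt f (deriv f x) x := (hfdiff x).hasDerivAt
    have H : HasDerivAt (fun t => k * (y * Real.log y) + y * f t) (y * deriv f x) x :=
      (hdf.const_mul y).const_add _
    rw [pdx, hfun]; exact H.deriv
  -- Step 3: M x y = g x + deriv f x / 2 * (1 - y ^ 2)
  have hMform : ∀ x y : ℝ, 0 < y → M x y = g x + deriv f x / 2 * (1 - y ^ 2) := by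
    intro x y hy
    have key : ∀ z ∈ Ioi (0:ℝ),
        HasDerivAt (fun s => M x s + deriv f x / 2 * s ^ 2) 0 z := by
      intro z hz
      have hz0 : (0:ℝ) < z := hz
      have hd1 : HasDerivAt (fun t => M x t) (pdy M x z) z := (sliceY M hM x z hz0).hasDerivAt
      have hpow : HasDerivAt (fun s : ℝ => deriv f x / 2 * s ^ 2)
          (deriv f x / 2 * (2 * z ^ 1)) z := by
        have := (hasDerivAt_pow 2 z).const_mul (deriv f x / 2)
        simpa using this
      have hφ := hd1.add hpow
      have hpdyM : pdy M x z = -(z * deriv f x) := by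
        have := h2 x z hz0; have := hNx x z hz0; linarith
      have hval : pdy M x z + deriv f x / 2 * (2 * z ^ 1) = 0 := by rw [hpdyM]; ring
      rwa [hval] at hφ
    have hconst := const_of_hasDerivAt_zero_Ioi key (mem_Ioi.mpr hy)
    simp only [one_pow] at hconst
    rw [hgdef]; simp only []
    nlinarith [hconst]
  -- Step 4: the key identity
  have key : ∀ x y : ℝ, 0 < y →
      deriv g x + deriv (deriv f) x / 2 * (1 - y ^ 2) = k * Real.log y + f x + k := by
    intro x y hy
    have hfun : (fun t => M t y) = fun t => g t + deriv f t / 2 * (1 - y ^ 2) :=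
      funext fun t => hMform t y hy
    have hg' : HasDerivAt g (deriv g x) x := (hgdiff x).hasDerivAt
    have hf2 : HasDerivAt (deriv f) (deriv (deriv f) x) x := (hf'diff x).hasDerivAt
    have H : HasDerivAt (fun t => g t + deriv f t / 2 * (1 - y ^ 2))
        (deriv g x + deriv (deriv f) x / 2 * (1 - y ^ 2)) x :=
      hg'.add ((hf2.div_const 2).mul_const _)
    have hpdx : pdx M x y = deriv g x + deriv (deriv f) x / 2 * (1 - y ^ 2) := by
      rw [pdx, hfun]; exact H.deriv
    have e1 := h1 x y hy
    rw [hpdx] at e1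
    have e2 : N x y / y = k * Real.log y + f x := by
      rw [hNform x y hy]; field_simp
    rw [e2] at e1; linarith
  -- Step 5: extract k = 0 and deriv (deriv f) = 0
  have hy1 := fun x => key x 1 one_pos
  simp only [Real.log_one, one_pow, sub_self, mul_zero, zero_mul, add_zero, zero_add,
    mul_zero] at hy1
  -- hy1 : deriv g x = f x + k  (after simp, deriv f''/2 * 0 vanishes)
  have hdg : ∀ x : ℝ, deriv g x = f x + k := by
    intro x; have := key x 1 one_pos
    simp only [Real.log_one, one_pow, sub_self, mul_zero, zero_mul, add_zero, zero_add] at this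
    linarith
  have hsub : ∀ x y : ℝ, 0 < y → deriv (deriv f) x / 2 * (1 - y ^ 2) = k * Real.log y := by
    intro x y hy
    have := key x y hy
    have := hdg x
    linarith
  have hf''0 : ∀ x : ℝ, deriv (deriv f) x = 0 := by
    intro x
    have h2' := hsub x 2 (by norm_num)
    have h4' := hsub x 4 (by norm_num)
    have hlog4 : Real.log 4 = 2 * Real.log 2 := by
      rw [show (4:ℝ) = 2 ^ 2 by norm_num, Real.log_pow]; push_cast; ring
    rw [hlog4] at h4'
    nlinarith [h2', h4']
  have hk0 : k = 0 := by
    have h2' := hsub 0 2 (by norm_num)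
    rw [hf''0 0] at h2'
    norm_num at h2'
    exact h2'
  have hlam : lam = 2 * rho - 1 := by rw [hk] at hk0; linarith
  refine ⟨hlam, ?_⟩
  -- Step 6: f and g are polynomials
  set a : ℝ := deriv f 0 with hadef
  have hf'const : ∀ x : ℝ, deriv f x = a := by
    intro x
    exact is_const_of_deriv_eq_zero hf'diff hf''0 x 0
  set b : ℝ := f 0 with hbdef
  have hflin : ∀ x : ℝ, f x = a * x + b := by
    intro x
    have key2 : ∀ z : ℝ, HasDerivAt (fun t => f t - a * t) 0 z := by
      intro z
      have := ((hfdiff z).hasDerivAt.sub ((hasDerivAt_id z).const_mul a))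
      rw [hf'const z] at this
      simpa [Pi.sub_def] using this
    have := const_of_hasDerivAt_zero key2 x
    simp only [mul_zero, sub_zero] at this
    rw [hbdef]; linarith
  have hgquad : ∀ x : ℝ, g x = a / 2 * x ^ 2 + b * x + g 0 := by
    intro x
    have key2 : ∀ z : ℝ, HasDerivAt (fun t => g t - (a / 2 * t ^ 2 + b * t)) 0 z := by
      intro z
      have hq : HasDerivAt (fun t : ℝ => a / 2 * t ^ 2 + b * t)
          (a / 2 * (2 * z ^ 1) + b) z := by
        have h1' := (hasDerivAt_pow 2 z).const_mul (a / 2)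
        have h2' := (hasDerivAt_id z).const_mul b
        simpa [Pi.add_def] using h1'.add h2'
      have := (hgdiff z).hasDerivAt.sub hq
      rw [hdg z, hflin z, hk0] at this
      have heq : f 0 = b := rfl
      have : HasDerivAt (fun t => g t - (a / 2 * t ^ 2 + b * t))
          (a * z + b + 0 - (a / 2 * (2 * z ^ 1) + b)) z := by
        exact this
      simpa using this.congr_deriv (by ring)
    have := const_of_hasDerivAt_zero key2 x
    simp only [ne_eq, OfNat.ofNat_ne_zero, not_false_eq_true, zero_pow, mul_zero, add_zero,
      sub_zero] at this
    linarith [this]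
  -- Step 7: conclude
  refine ⟨a, b, g 0 + a / 2, fun x y hy => ?_⟩
  constructor
  · rw [hMform x y hy, hgquad x, hf'const x]; ring
  · rw [hNform x y hy, hflin x, hk0]; ring
end

section
/- Let M, N : ℝ × (0,∞) → ℝ be smooth functions. Then the Killing field equations for the hyperbolic metric hold, namely for all (x,y) with y > 0: ∂M/∂x(x,y) − N(x,y)/y = 0, ∂M/∂y(x,y) + ∂N/∂x(x,y) = 0, and ∂N/∂y(x,y) − N(x,y)/y = 0, if and only if there exist real constants a, b, c such that for all (x,y) with y > 0: M(x,y) = (a/2)(x² − y²) + bx + c and N(x,y) = axy + by. -/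
open Set

lemma diff_fst (M : ℝ → ℝ → ℝ)
    (hM : ContDiffOn ℝ (⊤ : ℕ∞) (fun p : ℝ × ℝ => M p.1 p.2) {p : ℝ × ℝ | 0 < p.2})
    (x y : ℝ) (hy : 0 < y) : DifferentiableAt ℝ (fun t => M t y) x := by
  have hs : IsOpen {p : ℝ × ℝ | 0 < p.2} := isOpen_lt continuous_const continuous_snd
  have hmem : (x, y) ∈ {p : ℝ × ℝ | 0 < p.2} := hy
  have h := (hM.contDiffAt (hs.mem_nhds hmem)).differentiableAt (by simp)
  exact h.comp x ((differentiableAt_id : DifferentiableAt ℝ id x).prodMk (differentiableAt_const y))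

lemma diff_snd (M : ℝ → ℝ → ℝ)
    (hM : ContDiffOn ℝ (⊤ : ℕ∞) (fun p : ℝ × ℝ => M p.1 p.2) {p : ℝ × ℝ | 0 < p.2})
    (x y : ℝ) (hy : 0 < y) : DifferentiableAt ℝ (fun t => M x t) y := by
  have hs : IsOpen {p : ℝ × ℝ | 0 < p.2} := isOpen_lt continuous_const continuous_snd
  have hmem : (x, y) ∈ {p : ℝ × ℝ | 0 < p.2} := hy
  have h := (hM.contDiffAt (hs.mem_nhds hmem)).differentiableAt (by simp)
  exact h.comp y ((differentiableAt_const x).prodMk differentiableAt_id)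

/-- A function with zero derivative on `Ioi 0` is constant there. -/
lemma const_Ioi (f : ℝ → ℝ) (hf : ∀ y ∈ Ioi (0 : ℝ), HasDerivAt f 0 y) :
    ∀ y ∈ Ioi (0 : ℝ), f y = f 1 := by
  intro y hy
  have hconv : Convex ℝ (Ioi (0 : ℝ)) := convex_Ioi 0
  have hdiff : DifferentiableOn ℝ f (Ioi (0 : ℝ)) :=
    fun z hz => ((hf z hz).differentiableAt).differentiableWithinAt
  refine hconv.is_const_of_fderivWithin_eq_zero hdiff (fun z hz => ?_) hy
    (by norm_num : (1 : ℝ) ∈ Ioi (0 : ℝ))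
  have h1 : fderivWithin ℝ f (Ioi (0 : ℝ)) z = fderiv ℝ f z :=
    fderivWithin_of_isOpen isOpen_Ioi hz
  rw [h1, ((hf z hz).hasFDerivAt).fderiv]
  ext t
  simp

/-- classification of Killing fields of `ℍ²`, common content of Corollaries 3.4,
3.6 and 3.8: `X = M∂x + N∂y` satisfies the Killing equations iff `M = (a/2)(x²-y²) + bx + c`
and `N = axy + by` for some constants. -/
theorem stmt_7 (M N : ℝ → ℝ → ℝ)
    (hM : ContDiffOn ℝ (⊤ : ℕ∞) (fun p : ℝ × ℝ => M p.1 p.2) {p : ℝ × ℝ | 0 < p.2})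
    (hN : ContDiffOn ℝ (⊤ : ℕ∞) (fun p : ℝ × ℝ => N p.1 p.2) {p : ℝ × ℝ | 0 < p.2}) :
    (∀ x y : ℝ, 0 < y →
        pdx M x y - N x y / y = 0 ∧
        pdy M x y + pdx N x y = 0 ∧
        pdy N x y - N x y / y = 0) ↔
    ∃ a b c : ℝ, ∀ x y : ℝ, 0 < y →
      M x y = a / 2 * (x ^ 2 - y ^ 2) + b * x + c ∧ N x y = a * x * y + b * y := by
  constructor
  · intro h
    -- differentiability facts
    have dM1 : ∀ x y : ℝ, 0 < y → DifferentiableAt ℝ (fun t => M t y) x :=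
      fun x y hy => diff_fst M hM x y hy
    have dM2 : ∀ x y : ℝ, 0 < y → DifferentiableAt ℝ (fun t => M x t) y :=
      fun x y hy => diff_snd M hM x y hy
    have dN1 : ∀ x y : ℝ, 0 < y → DifferentiableAt ℝ (fun t => N t y) x :=
      fun x y hy => diff_fst N hN x y hy
    have dN2 : ∀ x y : ℝ, 0 < y → DifferentiableAt ℝ (fun t => N x t) y :=
      fun x y hy => diff_snd N hN x y hy
    set f : ℝ → ℝ := fun x => N x 1 with hf_def
    -- Step B : N x y = f x * y
    have stepB : ∀ x y : ℝ, 0 < y → N x y = f x * y := by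
      intro x y hy
      have hconst : ∀ z ∈ Ioi (0 : ℝ), N x z / z = N x 1 / 1 := by
        apply const_Ioi (fun z => N x z / z)
        intro z hz
        have hz0 : (0 : ℝ) < z := hz
        have hu : HasDerivAt (fun t => N x t) (N x z / z) z := by
          have := (dN2 x z hz0).hasDerivAt
          have heq : deriv (fun t => N x t) z = N x z / z := by
            have := (h x z hz0).2.2
            unfold pdy at this; linarith
          rwa [heq] at this
        have hv : HasDerivAt (fun t : ℝ => t⁻¹) (-(z ^ 2)⁻¹) z := hasDerivAt_inv (ne_of_gt hz0)
        have hprod : HasDerivAt (fun t => N x t * t⁻¹) (N x z / z * z⁻¹ + N x z * -(z ^ 2)⁻¹) z := hu.mul hv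
        have : (fun t => N x t * t⁻¹) = fun t => N x t / t := by
          funext t; rw [div_eq_mul_inv]
        rw [this] at hprod
        have hval : N x z / z * z⁻¹ + N x z * -(z ^ 2)⁻¹ = 0 := by
          field_simp
          ring
        rwa [hval] at hprod
      have hyy := hconst y hy
      rw [div_one] at hyy
      have h2 := (div_eq_iff (ne_of_gt hy)).mp hyy
      exact h2
    have hfd : Differentiable ℝ f := fun x => dN1 x 1 one_pos
    -- Step D : pdx N x y = deriv f x * y
    have stepD : ∀ x y : ℝ, 0 < y → pdx N x y = deriv f x * y := by
      intro x y hy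
      have heq : (fun t => N t y) = fun t => f t * y := by
        funext t; exact stepB t y hy
      unfold pdx
      rw [heq]
      exact (((hfd x).hasDerivAt).mul_const y).deriv
    -- Step E : deriv (fun t => M x t) y = -(deriv f x * y)
    have stepE : ∀ x y : ℝ, 0 < y → deriv (fun t => M x t) y = -(deriv f x * y) := by
      intro x y hy
      have := (h x y hy).2.1
      unfold pdy at this
      rw [stepD x y hy] at this
      linarith
    -- Step F : M x y = M x 1 - deriv f x * (y^2-1)/2
    have stepF : ∀ x y : ℝ, 0 < y → M x y = M x 1 - deriv f x * (y ^ 2 - 1) / 2 := by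
      intro x y hy
      have hconst : ∀ z ∈ Ioi (0 : ℝ),
          M x z + deriv f x * z ^ 2 / 2 = M x 1 + deriv f x * 1 ^ 2 / 2 := by
        apply const_Ioi (fun z => M x z + deriv f x * z ^ 2 / 2)
        intro z hz
        have hz0 : (0 : ℝ) < z := hz
        have h1 : HasDerivAt (fun t => M x t) (-(deriv f x * z)) z := by
          have := (dM2 x z hz0).hasDerivAt
          rwa [stepE x z hz0] at this
        have h2 : HasDerivAt (fun t : ℝ => deriv f x * t ^ 2 / 2) (deriv f x * z) z := by
          have hp : HasDerivAt (fun t : ℝ => t ^ 2) (2 * z) z := by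
            simpa using hasDerivAt_pow 2 z
          have := (hp.const_mul (deriv f x)).div_const 2
          exact this.congr_deriv (by ring)
        have : HasDerivAt (fun t => M x t + deriv f x * t ^ 2 / 2) (-(deriv f x * z) + deriv f x * z) z := h1.add h2
        simpa using this
      have := hconst y hy
      linarith [this]
    -- Step G : pdx M x y = f x
    have stepG : ∀ x y : ℝ, 0 < y → deriv (fun t => M t y) x = f x := by
      intro x y hy
      have := (h x y hy).1
      unfold pdx at this
      rw [stepB x y hy] at this
      have h2 : f x * y / y = f x := by field_simp
      rw [h2] at this
      linarith
    -- Step H : deriv f is constant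
    set a : ℝ := deriv f 0 with ha_def
    have stepH : ∀ x : ℝ, deriv f x = a := by
      have hrepr : (fun x => deriv f x) = fun x => (M x 1 - M x 2) * (2 / 3) := by
        funext x
        have h1 := stepF x 2 two_pos
        have : deriv f x * (2 ^ 2 - 1) / 2 = M x 1 - M x 2 := by linarith
        norm_num at this
        linarith
      have hder : ∀ x : ℝ, HasDerivAt (fun x => deriv f x) 0 x := by
        intro x
        rw [hrepr]
        have h1 : HasDerivAt (fun t => M t 1) (f x) x := by
          have := (dM1 x 1 one_pos).hasDerivAt
          rwa [stepG x 1 one_pos] at this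
        have h2 : HasDerivAt (fun t => M t 2) (f x) x := by
          have := (dM1 x 2 two_pos).hasDerivAt
          rwa [stepG x 2 two_pos] at this
        have := (h1.sub h2).mul_const (2 / 3 : ℝ)
        simpa using this
      have := is_const_of_deriv_eq_zero (fun x => (hder x).differentiableAt)
        (fun x => (hder x).deriv)
      intro x; exact this x 0
    -- Step I : f x = a * x + b
    set b : ℝ := f 0 with hb_def
    have stepI : ∀ x : ℝ, f x = a * x + b := by
      have hder : ∀ x : ℝ, HasDerivAt (fun x => f x - a * x) 0 x := by
        intro x
        have h1 : HasDerivAt f a x := by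
          have := (hfd x).hasDerivAt
          rwa [stepH x] at this
        have h2 : HasDerivAt (fun t : ℝ => a * t) a x := by
          simpa using (hasDerivAt_id x).const_mul a
        exact (h1.sub h2 : HasDerivAt (fun t => f t - a * t) (a - a) x).congr_deriv (sub_self a)
      have := is_const_of_deriv_eq_zero (fun x => (hder x).differentiableAt)
        (fun x => (hder x).deriv)
      intro x
      have := this x 0
      simp at this
      linarith
    -- Step J : M x 1 = M 0 1 + a x^2/2 + b x
    have stepJ : ∀ x : ℝ, M x 1 = M 0 1 + a * x ^ 2 / 2 + b * x := by
      have hder : ∀ x : ℝ,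
          HasDerivAt (fun x => M x 1 - (a * x ^ 2 / 2 + b * x)) 0 x := by
        intro x
        have h1 : HasDerivAt (fun t => M t 1) (a * x + b) x := by
          have := (dM1 x 1 one_pos).hasDerivAt
          rw [stepG x 1 one_pos, stepI x] at this
          exact this
        have h2 : HasDerivAt (fun t : ℝ => a * t ^ 2 / 2 + b * t) (a * x + b) x := by
          have hp : HasDerivAt (fun t : ℝ => t ^ 2) (2 * x) x := by
            simpa using hasDerivAt_pow 2 x
          have hq := (hp.const_mul a).div_const 2
          have hr : HasDerivAt (fun t : ℝ => b * t) b x := by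
            simpa using (hasDerivAt_id x).const_mul b
          have := hq.add hr
          exact this.congr_deriv (by ring)
        have : HasDerivAt (fun t => M t 1 - (a * t ^ 2 / 2 + b * t)) (a * x + b - (a * x + b)) x := h1.sub h2
        simpa using this
      have := is_const_of_deriv_eq_zero (fun x => (hder x).differentiableAt)
        (fun x => (hder x).deriv)
      intro x
      have := this x 0
      simp at this
      linarith
    refine ⟨a, b, M 0 1 + a / 2, fun x y hy => ?_⟩
    constructor
    · rw [stepF x y hy, stepJ x, stepH x]; ring
    · rw [stepB x y hy, stepI x]; ring
  · rintro ⟨a, b, c, hab⟩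
    intro x y hy
    have hyne : y ≠ 0 := ne_of_gt hy
    -- pdx M
    have hMx : pdx M x y = a * x + b := by
      unfold pdx
      have heq : (fun t => M t y) = fun t => a / 2 * (t ^ 2 - y ^ 2) + b * t + c := by
        funext t; exact (hab t y hy).1
      rw [heq]
      have hp : HasDerivAt (fun t : ℝ => t ^ 2) (2 * x) x := by
        simpa using hasDerivAt_pow 2 x
      have h1 : HasDerivAt (fun t : ℝ => a / 2 * (t ^ 2 - y ^ 2) + b * t + c)
          (a * x + b) x := by
        have h2 := ((hp.sub_const (y ^ 2)).const_mul (a / 2)).add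
          ((hasDerivAt_id x).const_mul b)
        have h3 := h2.add_const c
        exact h3.congr_deriv (by ring)
      exact h1.deriv
    -- pdy M
    have hMy : pdy M x y = -(a * y) := by
      unfold pdy
      have heq : (fun t => M x t) =ᶠ[nhds y]
          fun t => a / 2 * (x ^ 2 - t ^ 2) + b * x + c := by
        filter_upwards [isOpen_Ioi.mem_nhds hy] with t ht
        exact (hab x t ht).1
      rw [heq.deriv_eq]
      have hp : HasDerivAt (fun t : ℝ => t ^ 2) (2 * y) y := by
        simpa using hasDerivAt_pow 2 y
      have h1 : HasDerivAt (fun t : ℝ => a / 2 * (x ^ 2 - t ^ 2) + b * x + c)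
          (-(a * y)) y := by
        have h2 := (((hasDerivAt_const y (x ^ 2)).sub hp).const_mul (a / 2)).add_const
          (b * x)
        have h3 := h2.add_const c
        exact h3.congr_deriv (by ring)
      exact h1.deriv
    -- pdx N
    have hNx : pdx N x y = a * y := by
      unfold pdx
      have heq : (fun t => N t y) = fun t => a * t * y + b * y := by
        funext t; exact (hab t y hy).2
      rw [heq]
      have h1 : HasDerivAt (fun t : ℝ => a * t * y + b * y) (a * y) x := by
        have h2 := (((hasDerivAt_id x).const_mul a).mul_const y).add_const (b * y)
        exact h2.congr_deriv (by ring)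
      exact h1.deriv
    -- pdy N
    have hNy : pdy N x y = a * x + b := by
      unfold pdy
      have heq : (fun t => N x t) =ᶠ[nhds y] fun t => a * x * t + b * t := by
        filter_upwards [isOpen_Ioi.mem_nhds hy] with t ht
        exact (hab x t ht).2
      rw [heq.deriv_eq]
      have h1 : HasDerivAt (fun t : ℝ => a * x * t + b * t) (a * x + b) y := by
        have h2 := (((hasDerivAt_id y).const_mul (a * x))).add
          ((hasDerivAt_id y).const_mul b)
        exact h2.congr_deriv (by simp)
      exact h1.deriv
    have hNval : N x y = a * x * y + b * y := (hab x y hy).2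
    refine ⟨?_, ?_, ?_⟩
    · rw [hMx, hNval]; field_simp; ring
    · rw [hMy, hNx]; ring
    · rw [hNy, hNval]; field_simp; ring
end

section
/- Let F : ℝ × (0,∞) → ℝ be a smooth function such that for all (x,y) with y > 0: y·∂²F/∂x∂y(x,y) + ∂F/∂x(x,y) = 0. Then there exist smooth functions C : ℝ → ℝ and B : (0,∞) → ℝ such that F(x,y) = C(x)/y + B(y) for all (x,y) with y > 0. -/
open Set

private lemma const_of_hasDerivAt_zero_s8 {f : ℝ → ℝ} {s : Set ℝ} (hs : Convex ℝ s)
    (ho : IsOpen s) (hd : ∀ y ∈ s, HasDerivAt f 0 y) {a b : ℝ} (ha : a ∈ s) (hb : b ∈ s) :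
    f a = f b := by
  apply Convex.is_const_of_fderivWithin_eq_zero hs
    (fun y hy => ((hd y hy).differentiableAt).differentiableWithinAt) _ ha hb
  intro y hy
  rw [fderivWithin_of_isOpen ho hy, (hd y hy).hasFDerivAt.fderiv]
  ext
  simp

/-- intermediate claim in the proof of Theorem 3.2: if `y·F_xy + F_x = 0` on the
upper half-plane, then `F(x,y) = C(x)/y + B(y)` for some smooth functions `C` and `B`. -/
theorem stmt_8 (F : ℝ → ℝ → ℝ)
    (hF : ContDiffOn ℝ (⊤ : ℕ∞) (fun p : ℝ × ℝ => F p.1 p.2) {p : ℝ × ℝ | 0 < p.2})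
    (h : ∀ x y : ℝ, 0 < y → y * pdy (pdx F) x y + pdx F x y = 0) :
    ∃ C B : ℝ → ℝ, ContDiff ℝ (⊤ : ℕ∞) C ∧ ContDiffOn ℝ (⊤ : ℕ∞) B (Ioi 0) ∧
      ∀ x y : ℝ, 0 < y → F x y = C x / y + B y := by
  set G : ℝ × ℝ → ℝ := fun p => F p.1 p.2 with hG
  set S : Set (ℝ × ℝ) := {p : ℝ × ℝ | 0 < p.2} with hS
  have hSopen : IsOpen S := isOpen_lt continuous_const continuous_snd
  -- the function p ↦ ∂F/∂x at p, expressed via the full derivative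
  set Φ : ℝ × ℝ → ℝ := fun p => fderiv ℝ G p (1, 0) with hΦ
  have hΦsmooth : ContDiffOn ℝ (⊤ : ℕ∞) Φ S :=
    (hF.fderiv_of_isOpen hSopen (by simp)).clm_apply contDiffOn_const
  -- slices of F in x are smooth
  have hslicex : ∀ y : ℝ, 0 < y → ContDiff ℝ (⊤ : ℕ∞) (fun t => F t y) := by
    intro y hy
    have hmap : ContDiff ℝ (⊤ : ℕ∞) (fun t : ℝ => (t, y)) := contDiff_id.prodMk contDiff_const
    exact contDiff_iff_contDiffAt.2 fun t =>
      (hF.contDiffAt (hSopen.mem_nhds (by simpa [hS] using hy))).comp t hmap.contDiffAt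
  -- relation between pdx and Φ
  have hpdx : ∀ x y : ℝ, 0 < y → HasDerivAt (fun t => F t y) (Φ (x, y)) x := by
    intro x y hy
    have hGd : DifferentiableAt ℝ G (x, y) :=
      (hF.contDiffAt (hSopen.mem_nhds (by simpa [hS] using hy))).differentiableAt (by simp)
    have hmap : HasDerivAt (fun t : ℝ => (t, y)) ((1 : ℝ), (0 : ℝ)) x :=
      (hasDerivAt_id x).prodMk (hasDerivAt_const x y)
    exact hGd.hasFDerivAt.comp_hasDerivAt x hmap
  have hpdxΦ : ∀ x y : ℝ, 0 < y → pdx F x y = Φ (x, y) := fun x y hy =>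
    (hpdx x y hy).deriv
  -- slice of Φ in y is smooth on Ioi 0
  have hΦslice : ∀ x : ℝ, ContDiffOn ℝ (⊤ : ℕ∞) (fun t => Φ (x, t)) (Ioi 0) := by
    intro x
    have : ContDiff ℝ (⊤ : ℕ∞) (fun t : ℝ => (x, t)) := contDiff_const.prodMk contDiff_id
    exact hΦsmooth.comp this.contDiffOn (fun t ht => by simpa [hS] using ht)
  -- key: y * Φ(x,y) is constant in y on Ioi 0
  have hconst : ∀ x : ℝ, ∀ y : ℝ, 0 < y → y * Φ (x, y) = Φ (x, 1) := by
    intro x y hy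
    have key : ∀ z ∈ Ioi (0:ℝ), HasDerivAt (fun t => t * Φ (x, t)) 0 z := by
      intro z hz
      have hz' : (0:ℝ) < z := hz
      have hdiff : DifferentiableAt ℝ (fun t => Φ (x, t)) z :=
        ((hΦslice x z hz).differentiableWithinAt (by simp)).differentiableAt
          (isOpen_Ioi.mem_nhds hz)
      have hd : HasDerivAt (fun t => t * Φ (x, t))
          (1 * Φ (x, z) + z * deriv (fun t => Φ (x, t)) z) z :=
        (hasDerivAt_id z).mul hdiff.hasDerivAt
      have heq : pdy (pdx F) x z = deriv (fun t => Φ (x, t)) z := by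
        unfold pdy
        apply Filter.EventuallyEq.deriv_eq
        filter_upwards [isOpen_Ioi.mem_nhds hz'] with t ht
        exact hpdxΦ x t ht
      have h0 := h x z hz'
      rw [heq, hpdxΦ x z hz'] at h0
      have : 1 * Φ (x, z) + z * deriv (fun t => Φ (x, t)) z = 0 := by linarith
      rwa [this] at hd
    have := const_of_hasDerivAt_zero_s8 (convex_Ioi 0) isOpen_Ioi key
      (mem_Ioi.2 hy) (mem_Ioi.2 one_pos)
    simpa using this
  -- now the representation
  refine ⟨fun x => F x 1 - F 0 1, fun y => F 0 y, (hslicex 1 one_pos).sub contDiff_const, ?_, ?_⟩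
  · have : ContDiff ℝ (⊤ : ℕ∞) (fun t : ℝ => (0, t) : ℝ → ℝ × ℝ) := contDiff_const.prodMk contDiff_id
    exact hF.comp this.contDiffOn (fun t ht => by simpa [hS] using ht)
  · intro x y hy
    have hg : ∀ t : ℝ, HasDerivAt (fun s => F s y - F s 1 / y) 0 t := by
      intro t
      have h1 := hpdx t y hy
      have h2 := (hpdx t 1 one_pos).div_const y
      have := h1.sub h2
      have hval : Φ (t, y) - Φ (t, 1) / y = 0 := by
        have := hconst t y hy
        field_simp
        linarith
      rwa [hval] at this
    have hdiff : Differentiable ℝ (fun s => F s y - F s 1 / y) :=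
      fun t => (hg t).differentiableAt
    have := is_const_of_deriv_eq_zero hdiff (fun t => (hg t).deriv) x 0
    have hy' : y ≠ 0 := ne_of_gt hy
    field_simp at this ⊢
    linarith
end

section
/- Let n ≥ 2 be an integer and let F, G be smooth real-valued functions on the upper half-space {x ∈ ℝⁿ : xₙ > 0}, with G nowhere vanishing; let λ, ρ ∈ ℝ and set μ = λ + (n−1)(1−nρ). Suppose that on the upper half-space: for every i < n, G·(∂ᵢ∂ᵢF − (1/xₙ)∂ₙF) = μ/xₙ²; for all i ≠ j with i, j < n, ∂ᵢ∂ⱼF = 0; for every i < n, ∂ᵢ∂ₙF + (1/xₙ)∂ᵢF = 0; and G·(∂ₙ∂ₙF + (1/xₙ)∂ₙF) = μ/xₙ². Then there exist real constants a, c, e and b₁, …, b_{n−1} such that for all x in the upper half-space: F(x) = (1/xₙ)·Σ_{i=1}^{n−1}((a/2)xᵢ² + bᵢxᵢ) + (a/2)xₙ + c/xₙ + e, and moreover G(x)·((a/2)xₙ² + c + Σ_{i=1}^{n−1}((a/2)xᵢ² + bᵢxᵢ)) = μ·xₙ. -/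
open Set
open scoped ContDiff
open Topology

/-- Partial derivative in the `i`-th coordinate direction. -/
noncomputable def pd {m : ℕ} (i : Fin m) (f : (Fin m → ℝ) → ℝ) (x : Fin m → ℝ) : ℝ :=
  deriv (fun t => f (Function.update x i t)) (x i)

namespace Stmt9Aux

variable {m : ℕ}

lemma hasDerivAt_line {f : (Fin m → ℝ) → ℝ} (i : Fin m) (x : Fin m → ℝ) (s : ℝ)
    (hf : DifferentiableAt ℝ f (Function.update x i s)) :
    HasDerivAt (fun u => f (Function.update x i u))
      (fderiv ℝ f (Function.update x i s) (Pi.single i 1)) s :=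
  hf.hasFDerivAt.comp_hasDerivAt s (hasDerivAt_update x i s)

lemma pd_eq_fderiv {f : (Fin m → ℝ) → ℝ} {x : Fin m → ℝ} (hf : DifferentiableAt ℝ f x)
    (i : Fin m) : pd i f x = fderiv ℝ f x (Pi.single i 1) := by
  have h := hasDerivAt_line i x (x i) (by rwa [Function.update_eq_self])
  rw [Function.update_eq_self] at h
  exact h.deriv

variable {U : Set (Fin m → ℝ)}

lemma diffAt {E : Type*} [NormedAddCommGroup E] [NormedSpace ℝ E] (hU : IsOpen U)
    {f : (Fin m → ℝ) → E} (hf : ContDiffOn ℝ ∞ f U) {x : Fin m → ℝ}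
    (hx : x ∈ U) : DifferentiableAt ℝ f x :=
  (hf.differentiableOn (by norm_num)).differentiableAt (hU.mem_nhds hx)

lemma pd_eqOn (hU : IsOpen U) {f : (Fin m → ℝ) → ℝ} (hf : ContDiffOn ℝ ∞ f U) (i : Fin m)
    {x : Fin m → ℝ} (hx : x ∈ U) : pd i f x = fderiv ℝ f x (Pi.single i 1) :=
  pd_eq_fderiv (diffAt hU hf hx) i

lemma contDiffOn_pd (hU : IsOpen U) {f : (Fin m → ℝ) → ℝ} (hf : ContDiffOn ℝ ∞ f U) (i : Fin m) :
    ContDiffOn ℝ ∞ (pd i f) U := by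
  have hfd : ContDiffOn ℝ ∞ (fderiv ℝ f) U := hf.fderiv_of_isOpen hU (by norm_num)
  have h1 : ContDiffOn ℝ ∞ (fun y => fderiv ℝ f y (Pi.single i 1)) U :=
    hfd.clm_apply contDiffOn_const
  exact h1.congr fun y hy => pd_eqOn hU hf i hy

lemma hasDerivAt_pd_line (hU : IsOpen U) {f : (Fin m → ℝ) → ℝ} (hf : ContDiffOn ℝ ∞ f U)
    (i : Fin m) (x : Fin m → ℝ) (s : ℝ) (hxs : Function.update x i s ∈ U) :
    HasDerivAt (fun u => f (Function.update x i u)) (pd i f (Function.update x i s)) s := by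
  rw [pd_eqOn hU hf i hxs]
  exact hasDerivAt_line i x s (diffAt hU hf hxs)

lemma pd_comm (hU : IsOpen U) {f : (Fin m → ℝ) → ℝ} (hf : ContDiffOn ℝ ∞ f U)
    {x : Fin m → ℝ} (hx : x ∈ U) (i j : Fin m) :
    pd i (pd j f) x = pd j (pd i f) x := by
  have hdf : ∀ᶠ y in 𝓝 x, HasFDerivAt f (fderiv ℝ f y) y := by
    filter_upwards [hU.mem_nhds hx] with y hy
    exact (diffAt hU hf hy).hasFDerivAt
  have hfd : ContDiffOn ℝ ∞ (fderiv ℝ f) U := hf.fderiv_of_isOpen hU (by norm_num)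
  have hdf2 : DifferentiableAt ℝ (fderiv ℝ f) x := diffAt hU hfd hx
  have sym := second_derivative_symmetric_of_eventually_of_real hdf hdf2.hasFDerivAt
  have key : ∀ v w : Fin m → ℝ,
      fderiv ℝ (fun y => fderiv ℝ f y v) x w = fderiv ℝ (fderiv ℝ f) x w v := by
    intro v w
    rw [fderiv_clm_apply hdf2 (differentiableAt_const v)]
    simp
  have heq : ∀ j : Fin m, pd j f =ᶠ[𝓝 x] fun y => fderiv ℝ f y (Pi.single j 1) := by
    intro j
    filter_upwards [hU.mem_nhds hx] with y hy
    exact pd_eqOn hU hf j hy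
  have e1 : ∀ i j : Fin m, pd i (pd j f) x
      = fderiv ℝ (fderiv ℝ f) x (Pi.single i 1) (Pi.single j 1) := by
    intro i j
    have hd : DifferentiableAt ℝ (pd j f) x := diffAt hU (contDiffOn_pd hU hf j) hx
    rw [pd_eq_fderiv hd i, (heq j).fderiv_eq, key]
  rw [e1, e1, sym]

lemma const_univ {g : ℝ → ℝ} (h : ∀ s, HasDerivAt g 0 s) (s t : ℝ) : g s = g t :=
  is_const_of_deriv_eq_zero (fun u => (h u).differentiableAt) (fun u => (h u).deriv) s t

lemma const_Ioi {g : ℝ → ℝ} (h : ∀ s, 0 < s → HasDerivAt g 0 s) {s t : ℝ}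
    (hs : 0 < s) (ht : 0 < t) : g s = g t := by
  have main : ∀ u v : ℝ, 0 < u → 0 < v → u < v → g u = g v := by
    intro u v hu hv huv
    have hc : ContinuousOn g (Icc u v) := fun z hz =>
      (h z (lt_of_lt_of_le hu hz.1)).continuousAt.continuousWithinAt
    obtain ⟨c, hc1, hc2⟩ := exists_hasDerivAt_eq_slope g (fun _ => 0) huv hc
      (fun z hz => h z (lt_trans hu hz.1))
    have hd0 := div_eq_zero_iff.mp hc2.symm
    rcases hd0 with h' | h'
    · linarith
    · exact absurd h' (by intro h''; linarith)
  rcases lt_trichotomy s t with h' | h' | h'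
  · exact main s t hs ht h'
  · rw [h']
  · exact (main t s ht hs h').symm

lemma zero_outside {n : ℕ} (N : Fin n) (g : (Fin n → ℝ) → ℝ) (keep : Fin n → Prop)
    [DecidablePred keep] (hkN : keep N)
    (hline : ∀ j, ¬ keep j → ∀ x, 0 < x N → ∀ s, g (Function.update x j s) = g x) :
    ∀ x, 0 < x N → g x = g (fun k => if keep k then x k else 0) := by
  intro x hx
  have key : ∀ S : Finset (Fin n), (∀ j ∈ S, ¬ keep j) →
      g x = g (fun k => if k ∈ S then 0 else x k) := by
    intro S
    induction S using Finset.induction_on with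
    | empty => intro _; simp
    | insert j S hjS ih =>
      intro hS
      have h1 : g x = g (fun k => if k ∈ S then 0 else x k) :=
        ih fun j' hj' => hS j' (Finset.mem_insert_of_mem hj')
      have hNS : N ∉ S := fun h => hS N (Finset.mem_insert_of_mem h) hkN
      have hxS : 0 < (fun k => if k ∈ S then 0 else x k) N := by simpa [hNS]
      have h2 := hline j (hS j (Finset.mem_insert_self _ _)) (fun k => if k ∈ S then 0 else x k) hxS 0
      rw [h1, ← h2]
      congr 1
      funext k
      by_cases hk : k = j
      · subst hk; simp [hjS]
      · simp [Function.update_apply, hk, Finset.mem_insert]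
  have h := key (Finset.univ.filter fun j => ¬ keep j) (by simp)
  rw [h]
  congr 1
  funext k
  by_cases hk : keep k <;> simp [hk]

end Stmt9Aux
/-- Theorem 3.10: for a gradient `G`-Ricci–Bourguignon soliton on the upper
half-space `ℍⁿ` (with `μ = λ + (n-1)(1-nρ)`), the potential is
`F(x) = (1/xₙ)·Σᵢ((a/2)xᵢ² + bᵢxᵢ) + (a/2)xₙ + c/xₙ + e`, and
`G·((a/2)xₙ² + c + Σᵢ((a/2)xᵢ² + bᵢxᵢ)) = μ·xₙ`. -/
theorem stmt_9 (n : ℕ) (hn : 2 ≤ n) (F G : (Fin n → ℝ) → ℝ) (lam rho mu : ℝ)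
    (hmu : mu = lam + ((n : ℝ) - 1) * (1 - (n : ℝ) * rho))
    (hF : ContDiffOn ℝ (⊤ : ℕ∞) F {x : Fin n → ℝ | 0 < x ⟨n - 1, by omega⟩})
    (hG : ContDiffOn ℝ (⊤ : ℕ∞) G {x : Fin n → ℝ | 0 < x ⟨n - 1, by omega⟩})
    (hG0 : ∀ x : Fin n → ℝ, 0 < x ⟨n - 1, by omega⟩ → G x ≠ 0)
    (h1 : ∀ i : Fin n, (i : ℕ) < n - 1 → ∀ x : Fin n → ℝ, 0 < x ⟨n - 1, by omega⟩ →
      G x * (pd i (pd i F) x - (1 / x ⟨n - 1, by omega⟩) * pd ⟨n - 1, by omega⟩ F x)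
        = mu / (x ⟨n - 1, by omega⟩) ^ 2)
    (h2 : ∀ i j : Fin n, (i : ℕ) < n - 1 → (j : ℕ) < n - 1 → i ≠ j →
      ∀ x : Fin n → ℝ, 0 < x ⟨n - 1, by omega⟩ → pd i (pd j F) x = 0)
    (h3 : ∀ i : Fin n, (i : ℕ) < n - 1 → ∀ x : Fin n → ℝ, 0 < x ⟨n - 1, by omega⟩ →
      pd i (pd ⟨n - 1, by omega⟩ F) x + (1 / x ⟨n - 1, by omega⟩) * pd i F x = 0)
    (h4 : ∀ x : Fin n → ℝ, 0 < x ⟨n - 1, by omega⟩ →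
      G x * (pd ⟨n - 1, by omega⟩ (pd ⟨n - 1, by omega⟩ F) x
          + (1 / x ⟨n - 1, by omega⟩) * pd ⟨n - 1, by omega⟩ F x)
        = mu / (x ⟨n - 1, by omega⟩) ^ 2) :
    ∃ (a c e : ℝ) (b : Fin (n - 1) → ℝ), ∀ x : Fin n → ℝ, 0 < x ⟨n - 1, by omega⟩ →
      F x = (1 / x ⟨n - 1, by omega⟩) *
              (∑ i : Fin (n - 1), (a / 2 * (x (Fin.castLE (by omega) i)) ^ 2
                + b i * x (Fin.castLE (by omega) i)))
            + a / 2 * x ⟨n - 1, by omega⟩ + c / x ⟨n - 1, by omega⟩ + e ∧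
      G x * (a / 2 * (x ⟨n - 1, by omega⟩) ^ 2 + c
              + ∑ i : Fin (n - 1), (a / 2 * (x (Fin.castLE (by omega) i)) ^ 2
                + b i * x (Fin.castLE (by omega) i)))
        = mu * x ⟨n - 1, by omega⟩ := by
  classical
  have hn1 : 0 < n - 1 := by omega
  have hle : n - 1 ≤ n := by omega
  let N : Fin n := ⟨n - 1, by omega⟩
  let D : Set (Fin n → ℝ) := {x | 0 < x N}
  have hD : IsOpen D := isOpen_lt continuous_const (continuous_apply N)
  have hF' : ContDiffOn ℝ ∞ F D := hF.of_le (by simp)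
  -- restated hypotheses
  have h1' : ∀ i : Fin n, (i : ℕ) < n - 1 → ∀ x, x ∈ D →
      G x * (pd i (pd i F) x - (1 / x N) * pd N F x) = mu / (x N) ^ 2 := h1
  have h2' : ∀ i j : Fin n, (i : ℕ) < n - 1 → (j : ℕ) < n - 1 → i ≠ j → ∀ x, x ∈ D →
      pd i (pd j F) x = 0 := h2
  have h3' : ∀ i : Fin n, (i : ℕ) < n - 1 → ∀ x, x ∈ D →
      pd i (pd N F) x + (1 / x N) * pd i F x = 0 := h3
  have h4' : ∀ x, x ∈ D →
      G x * (pd N (pd N F) x + (1 / x N) * pd N F x) = mu / (x N) ^ 2 := h4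
  have hG0' : ∀ x, x ∈ D → G x ≠ 0 := hG0
  have hne : ∀ i : Fin n, (i : ℕ) < n - 1 → i ≠ N := by
    intro i hi h
    have : (i : ℕ) = n - 1 := congrArg Fin.val h
    omega
  have memD : ∀ (x : Fin n → ℝ), x ∈ D → ∀ (i : Fin n), i ≠ N → ∀ s : ℝ,
      Function.update x i s ∈ D := by
    intro x hx i hiN s
    show 0 < Function.update x i s N
    rw [Function.update_of_ne (Ne.symm hiN)]
    exact hx
  have memDN : ∀ (x : Fin n → ℝ) (s : ℝ), 0 < s → Function.update x N s ∈ D := by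
    intro x s hs
    show 0 < Function.update x N s N
    rw [Function.update_self]
    exact hs
  have hpdF : ∀ i : Fin n, ContDiffOn ℝ ∞ (pd i F) D := fun i =>
    Stmt9Aux.contDiffOn_pd hD hF' i
  have lineF : ∀ (g : (Fin n → ℝ) → ℝ), ContDiffOn ℝ ∞ g D → ∀ (i : Fin n) (x : Fin n → ℝ)
      (s : ℝ), Function.update x i s ∈ D →
      HasDerivAt (fun u => g (Function.update x i u)) (pd i g (Function.update x i s)) s :=
    fun g hg i x s h => Stmt9Aux.hasDerivAt_pd_line hD hg i x s h
  have constLine : ∀ (g : (Fin n → ℝ) → ℝ), ContDiffOn ℝ ∞ g D → ∀ (j : Fin n), j ≠ N →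
      (∀ y ∈ D, pd j g y = 0) → ∀ x, x ∈ D → ∀ s : ℝ, g (Function.update x j s) = g x := by
    intro g hg j hjN hz x hx s
    have h0 : ∀ u : ℝ, HasDerivAt (fun u => g (Function.update x j u)) 0 u := by
      intro u
      have hm := memD x hx j hjN u
      have h := lineF g hg j x u hm
      rwa [hz _ hm] at h
    have h := Stmt9Aux.const_univ h0 s (x j)
    rwa [Function.update_eq_self] at h
  have pdc : ∀ (g : (Fin n → ℝ) → ℝ), ContDiffOn ℝ ∞ g D → ∀ (i j : Fin n) (x), x ∈ D →
      pd i (pd j g) x = pd j (pd i g) x := fun g hg i j x hx => Stmt9Aux.pd_comm hD hg hx i j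
  have hsym3 : ∀ i : Fin n, (i : ℕ) < n - 1 → ∀ x, x ∈ D →
      pd N (pd i F) x = -(1 / x N) * pd i F x := by
    intro i hi x hx
    rw [← pdc F hF' i N x hx]
    have h := h3' i hi x hx
    linarith
  -- Step W : s * ∂ᵢF(update x N s) = x_N * ∂ᵢF x
  have hW : ∀ i : Fin n, (i : ℕ) < n - 1 → ∀ x, x ∈ D → ∀ s : ℝ, 0 < s →
      s * pd i F (Function.update x N s) = x N * pd i F x := by
    intro i hi x hx s hs
    have key : ∀ u : ℝ, 0 < u →
        HasDerivAt (fun u => u * pd i F (Function.update x N u)) 0 u := by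
      intro u hu
      have hm := memDN x u hu
      have hd := lineF (pd i F) (hpdF i) N x u hm
      have hval : pd N (pd i F) (Function.update x N u)
          = -(1 / u) * pd i F (Function.update x N u) := by
        have h := hsym3 i hi _ hm
        rwa [Function.update_self] at h
      rw [hval] at hd
      have hmul := (hasDerivAt_id u).mul hd
      refine hmul.congr_deriv (Eq.symm ?_)
      simp only [id_eq]
      have hu0 : u ≠ 0 := ne_of_gt hu
      field_simp
      ring
    have h := Stmt9Aux.const_Ioi key hs hx
    rwa [Function.update_eq_self] at h
  -- base point and phi
  let p : Fin n → ℝ := fun k => if k = N then 1 else 0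
  have hp : p ∈ D := by show (0:ℝ) < p N; simp [p]
  have hpi : ∀ i : Fin n, i ≠ N → p i = 0 := by intro i hiN; simp [p, hiN]
  have hpN : p N = 1 := by simp [p]
  let phi : Fin n → ℝ → ℝ := fun i s => pd i F (Function.update p i s)
  have hrep : ∀ i : Fin n, (i : ℕ) < n - 1 → ∀ x, x ∈ D →
      pd i F x = phi i (x i) / x N := by
    intro i hi x hx
    have hiN := hne i hi
    have h1w := hW i hi x hx 1 one_pos
    rw [one_mul] at h1w
    have hy : Function.update x N 1 ∈ D := memDN x 1 one_pos
    have keep : ∀ j : Fin n, ¬ (j = i ∨ j = N) → ∀ z : Fin n → ℝ, 0 < z N → ∀ s : ℝ,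
        pd i F (Function.update z j s) = pd i F z := by
      intro j hj z hz s
      push_neg at hj
      have hjN : j ≠ N := hj.2
      have hjlt : (j : ℕ) < n - 1 := by
        have h1j := j.isLt
        have h2j : (j : ℕ) ≠ n - 1 := fun h => hjN (Fin.ext h)
        omega
      exact constLine (pd i F) (hpdF i) j hjN
        (fun y hy => h2' j i hjlt hi hj.1 y hy) z hz s
    have hz := Stmt9Aux.zero_outside N (pd i F) (fun k => k = i ∨ k = N) (Or.inr rfl) keep
      (Function.update x N 1) hy
    have hzeq : (fun k => if (k = i ∨ k = N) then Function.update x N 1 k else 0)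
        = Function.update p i (x i) := by
      funext k
      by_cases hk : k = i
      · subst hk
        simp [Function.update_of_ne hiN, Function.update_self]
      · by_cases hkN : k = N
        · subst hkN
          simp [Function.update_self, Function.update_of_ne (Ne.symm hiN), hpN]
        · simp [hk, hkN, Function.update_of_ne hk, hpi k hkN]
    rw [hzeq] at hz
    have hxN : x N ≠ 0 := ne_of_gt hx
    have : pd i F (Function.update p i (x i)) = x N * pd i F x := by rw [← hz, h1w]
    show pd i F x = pd i F (Function.update p i (x i)) / x N
    rw [this]
    field_simp
  -- the constant a
  let a : ℝ := pd N (pd N F) p + 2 * pd N F p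
  have heq14 : ∀ i : Fin n, (i : ℕ) < n - 1 → ∀ x, x ∈ D →
      pd i (pd i F) x = pd N (pd N F) x + (2 / x N) * pd N F x := by
    intro i hi x hx
    have e1 := h1' i hi x hx
    have e2 := h4' x hx
    have hGx := hG0' x hx
    have h := sub_eq_zero.mpr (e1.trans e2.symm)
    rw [← mul_sub] at h
    rcases mul_eq_zero.mp h with h' | h'
    · exact absurd h' hGx
    · have h'' := sub_eq_zero.mp h'
      linear_combination h''
  have hupN : ∀ (z : Fin n → ℝ) (i : Fin n), i ≠ N → ∀ s : ℝ,
      (Function.update z i s) N = z N :=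
    fun z i hi s => Function.update_of_ne (Ne.symm hi) _ _
  have hphi' : ∀ i : Fin n, (i : ℕ) < n - 1 → ∀ s : ℝ, HasDerivAt (phi i) a s := by
    intro i hi s
    have hiN := hne i hi
    have hq : Function.update p i s ∈ D := memD p hp i hiN s
    have hqN : (Function.update p i s) N = 1 := by rw [hupN p i hiN s, hpN]
    have hd : HasDerivAt (phi i) (pd i (pd i F) (Function.update p i s)) s :=
      lineF (pd i F) (hpdF i) i p s hq
    suffices hval : pd i (pd i F) (Function.update p i s) = a by rwa [hval] at hd
    rw [heq14 i hi _ hq, hqN]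
    have hg2 : ∀ u : ℝ, HasDerivAt (fun u => pd N (pd N F) (Function.update p i u)
        + 2 * pd N F (Function.update p i u)) 0 u := by
      intro u
      have hqu : Function.update p i u ∈ D := memD p hp i hiN u
      have hquN : (Function.update p i u) N = 1 := by rw [hupN p i hiN u, hpN]
      have hd1 := lineF (pd N (pd N F)) (Stmt9Aux.contDiffOn_pd hD (hpdF N) N) i p u hqu
      have hd2 := lineF (pd N F) (hpdF N) i p u hqu
      have v2 : pd i (pd N F) (Function.update p i u) = - phi i u := by
        have h3v := h3' i hi _ hqu
        have hrep2 := hrep i hi _ hqu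
        rw [hquN] at h3v hrep2
        rw [Function.update_self] at hrep2
        rw [hrep2] at h3v
        linarith [h3v]
      have v1 : pd i (pd N (pd N F)) (Function.update p i u) = 2 * phi i u := by
        rw [pdc (pd N F) (hpdF N) i N _ hqu]
        have heqv : (fun t => pd i (pd N F)
            (Function.update (Function.update p i u) N t))
            =ᶠ[nhds (1:ℝ)] fun t => -(phi i u) / t ^ 2 := by
          filter_upwards [Ioi_mem_nhds one_pos] with t ht
          have hyt : Function.update (Function.update p i u) N t ∈ D := memDN _ t ht
          have hytN : (Function.update (Function.update p i u) N t) N = t :=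
            Function.update_self _ _ _
          have h3v := h3' i hi _ hyt
          have hrept := hrep i hi _ hyt
          have hyti : (Function.update (Function.update p i u) N t) i = u := by
            rw [Function.update_of_ne hiN, Function.update_self]
          rw [hytN] at h3v hrept
          rw [hyti] at hrept
          rw [hrept] at h3v
          have ht0 : t ≠ 0 := ne_of_gt ht
          field_simp at h3v ⊢
          linarith
        have hrw : pd N (pd i (pd N F)) (Function.update p i u)
            = deriv (fun t => -(phi i u) / t ^ 2) 1 := by
          show deriv (fun t => pd i (pd N F)
            (Function.update (Function.update p i u) N t)) ((Function.update p i u) N) = _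
          rw [hquN]
          exact heqv.deriv_eq
        rw [hrw]
        have hDE : HasDerivAt (fun t : ℝ => -(phi i u) / t ^ 2) (2 * phi i u) 1 := by
          have h := (hasDerivAt_const (1:ℝ) (-(phi i u))).div (hasDerivAt_pow 2 (1:ℝ))
            (by norm_num)
          refine h.congr_deriv (Eq.symm ?_)
          norm_num
          ring
        rw [hDE.deriv]
      rw [v1] at hd1
      rw [v2] at hd2
      have hsum := hd1.add (hd2.const_mul 2)
      refine hsum.congr_deriv (Eq.symm ?_)
      ring
    have hconst := Stmt9Aux.const_univ hg2 s 0
    have hp0 : Function.update p i 0 = p := by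
      rw [← hpi i hiN, Function.update_eq_self]
    rw [hp0] at hconst
    rw [show (2 : ℝ) / 1 = 2 by norm_num]
    rw [hconst]
  -- phi is linear
  have hphi_lin : ∀ i : Fin n, (i : ℕ) < n - 1 → ∀ s : ℝ, phi i s = a * s + phi i 0 := by
    intro i hi s
    have h0 : ∀ u : ℝ, HasDerivAt (fun u => phi i u - a * u) 0 u := by
      intro u
      have h := (hphi' i hi u).sub ((hasDerivAt_id u).const_mul a)
      refine h.congr_deriv (Eq.symm ?_)
      ring
    have h := Stmt9Aux.const_univ h0 s 0
    have h' : phi i s - a * s = phi i 0 - a * 0 := h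
    linarith
  have hpdF_lin : ∀ i : Fin n, (i : ℕ) < n - 1 → ∀ x, x ∈ D →
      pd i F x = (a * x i + phi i 0) / x N := by
    intro i hi x hx
    rw [hrep i hi x hx, hphi_lin i hi (x i)]
  -- b and SS
  let b : Fin (n - 1) → ℝ := fun i0 => phi (Fin.castLE hle i0) 0
  let SS : (Fin n → ℝ) → ℝ := fun x => ∑ i0 : Fin (n - 1),
    (a / 2 * (x (Fin.castLE hle i0)) ^ 2 + b i0 * x (Fin.castLE hle i0))
  have hcast_lt : ∀ i0 : Fin (n - 1), ((Fin.castLE hle i0 : Fin n) : ℕ) < n - 1 :=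
    fun i0 => i0.isLt
  have hcast_ne : ∀ i0 : Fin (n - 1), Fin.castLE hle i0 ≠ N :=
    fun i0 => hne _ (hcast_lt i0)
  have hSS_N : ∀ (x : Fin n → ℝ) (s : ℝ), SS (Function.update x N s) = SS x := by
    intro x s
    refine Finset.sum_congr rfl fun i0 _ => ?_
    rw [Function.update_of_ne (hcast_ne i0)]
  have hSS_line : ∀ (i0 : Fin (n - 1)) (x : Fin n → ℝ) (s : ℝ),
      HasDerivAt (fun u => SS (Function.update x (Fin.castLE hle i0) u)) (a * s + b i0) s := by
    intro i0 x s
    have hsum : HasDerivAt (fun u => ∑ j : Fin (n - 1),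
        (a / 2 * ((Function.update x (Fin.castLE hle i0) u) (Fin.castLE hle j)) ^ 2
          + b j * (Function.update x (Fin.castLE hle i0) u) (Fin.castLE hle j)))
        (∑ j : Fin (n - 1), if j = i0 then a * s + b i0 else 0) s := by
      apply HasDerivAt.fun_sum
      intro j _
      by_cases hj : j = i0
      · subst hj
        rw [if_pos rfl]
        have hfun : (fun u => a / 2 *
            ((Function.update x (Fin.castLE hle j) u) (Fin.castLE hle j)) ^ 2
            + b j * (Function.update x (Fin.castLE hle j) u) (Fin.castLE hle j))
            = fun u => a / 2 * u ^ 2 + b j * u := by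
          funext u; rw [Function.update_self]
        rw [hfun]
        have h1 := ((hasDerivAt_pow 2 s).const_mul (a / 2)).add
          ((hasDerivAt_id s).const_mul (b j))
        refine h1.congr_deriv (Eq.symm ?_)
        ring
      · have hne2 : Fin.castLE hle j ≠ Fin.castLE hle i0 := by
          intro h
          exact hj (Fin.castLE_injective hle h)
        have hfun : (fun u => a / 2 *
            ((Function.update x (Fin.castLE hle i0) u) (Fin.castLE hle j)) ^ 2
            + b j * (Function.update x (Fin.castLE hle i0) u) (Fin.castLE hle j))
            = fun _ : ℝ => a / 2 * (x (Fin.castLE hle j)) ^ 2 + b j * x (Fin.castLE hle j) := by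
          funext u; rw [Function.update_of_ne hne2]
        rw [hfun, if_neg hj]
        exact hasDerivAt_const s _
    have hval : (∑ j : Fin (n - 1), if j = i0 then a * s + b i0 else 0) = a * s + b i0 := by
      simp
    rw [hval] at hsum
    exact hsum
  -- H and its independence of the first coordinates
  let H : (Fin n → ℝ) → ℝ := fun x => F x - (1 / x N) * SS x
  have hSSsmooth : ContDiff ℝ ∞ SS := by
    apply ContDiff.sum
    intro i0 _
    have hproj : ContDiff ℝ ∞ (fun x : Fin n → ℝ => x (Fin.castLE hle i0)) :=
      (ContinuousLinearMap.proj (R := ℝ) (φ := fun _ : Fin n => ℝ)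
        (Fin.castLE hle i0)).contDiff
    exact (contDiff_const.mul (hproj.pow 2)).add (contDiff_const.mul hproj)
  have hinv : ContDiffOn ℝ ∞ (fun x : Fin n → ℝ => 1 / x N) D := by
    apply ContDiffOn.div contDiffOn_const
    · exact ((ContinuousLinearMap.proj (R := ℝ) (φ := fun _ : Fin n => ℝ)
        N).contDiff).contDiffOn
    · intro x hx; exact ne_of_gt hx
  have hH : ContDiffOn ℝ ∞ H D := hF'.sub (hinv.mul hSSsmooth.contDiffOn)
  have hpdH0 : ∀ i0 : Fin (n - 1), ∀ x, x ∈ D → pd (Fin.castLE hle i0) H x = 0 := by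
    intro i0 x hx
    have hiN : Fin.castLE hle i0 ≠ N := hcast_ne i0
    have hfun : (fun t => H (Function.update x (Fin.castLE hle i0) t))
        = fun t => F (Function.update x (Fin.castLE hle i0) t)
          - (1 / x N) * SS (Function.update x (Fin.castLE hle i0) t) := by
      funext t
      show F _ - (1 / (Function.update x (Fin.castLE hle i0) t) N) * SS _ = _
      rw [Function.update_of_ne (Ne.symm hiN)]
    have hd1 := lineF F hF' (Fin.castLE hle i0) x (x (Fin.castLE hle i0))
      (by rwa [Function.update_eq_self])
    rw [Function.update_eq_self] at hd1
    have hd2 := (hSS_line i0 x (x (Fin.castLE hle i0))).const_mul (1 / x N)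
    have hd := hd1.sub hd2
    have hder : pd (Fin.castLE hle i0) H x
        = pd (Fin.castLE hle i0) F x - 1 / x N * (a * x (Fin.castLE hle i0) + b i0) := by
      show deriv (fun t => H (Function.update x (Fin.castLE hle i0) t))
        (x (Fin.castLE hle i0)) = _
      rw [hfun]
      exact hd.deriv
    rw [hder, hpdF_lin (Fin.castLE hle i0) (hcast_lt i0) x hx]
    have hxN : x N ≠ 0 := ne_of_gt hx
    have hbi : b i0 = phi (Fin.castLE hle i0) 0 := rfl
    rw [hbi]
    field_simp
    ring
  have hHline : ∀ j : Fin n, ¬ (j = N) → ∀ x : Fin n → ℝ, 0 < x N → ∀ s : ℝ,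
      H (Function.update x j s) = H x := by
    intro j hjN x hx s
    have hjlt : (j : ℕ) < n - 1 := by
      have h1j := j.isLt
      have h2j : (j : ℕ) ≠ n - 1 := fun h => hjN (Fin.ext h)
      omega
    have hcj : Fin.castLE hle ⟨(j : ℕ), hjlt⟩ = j := Fin.ext rfl
    refine constLine H hH j hjN (fun y hy => ?_) x hx s
    have h := hpdH0 ⟨(j : ℕ), hjlt⟩ y hy
    rwa [hcj] at h
  have hHonly : ∀ x, x ∈ D → H x = H (Function.update p N (x N)) := by
    intro x hx
    have h := Stmt9Aux.zero_outside N H (fun k => k = N) rfl hHline x hx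
    rw [h]
    congr 1
    funext k
    by_cases hk : k = N
    · subst hk; simp [Function.update_self]
    · rw [if_neg hk, Function.update_of_ne hk, hpi k hk]
  -- one-variable reductions
  let psi : ℝ → ℝ := fun s => H (Function.update p N s)
  let psi1 : ℝ → ℝ := fun s => pd N H (Function.update p N s)
  let psi2 : ℝ → ℝ := fun s => pd N (pd N H) (Function.update p N s)
  have hpsid : ∀ s : ℝ, 0 < s → HasDerivAt psi (psi1 s) s :=
    fun s hs => lineF H hH N p s (memDN p s hs)
  have hpdNH : ContDiffOn ℝ ∞ (pd N H) D := Stmt9Aux.contDiffOn_pd hD hH N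
  have hpsi1d : ∀ s : ℝ, 0 < s → HasDerivAt psi1 (psi2 s) s :=
    fun s hs => lineF (pd N H) hpdNH N p s (memDN p s hs)
  have hHval : ∀ x, x ∈ D → H x = psi (x N) := fun x hx => hHonly x hx
  have hpdNHval : ∀ x, x ∈ D → pd N H x = psi1 (x N) := by
    intro x hx
    have heqv : (fun t => H (Function.update x N t)) =ᶠ[nhds (x N)] psi := by
      filter_upwards [Ioi_mem_nhds hx] with t ht
      have h := hHval (Function.update x N t) (memDN x t ht)
      rwa [Function.update_self] at h
    show deriv (fun t => H (Function.update x N t)) (x N) = psi1 (x N)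
    rw [heqv.deriv_eq]
    exact (hpsid (x N) hx).deriv
  have hFdecomp : ∀ x, x ∈ D → F x = psi (x N) + (1 / x N) * SS x := by
    intro x hx
    have h := hHval x hx
    have hHx : H x = F x - (1 / x N) * SS x := rfl
    rw [hHx] at h
    linarith
  have hpdNF : ∀ x, x ∈ D → pd N F x = psi1 (x N) - SS x / (x N) ^ 2 := by
    intro x hx
    have heqv : (fun t => F (Function.update x N t)) =ᶠ[nhds (x N)]
        fun t => psi t + SS x / t := by
      filter_upwards [Ioi_mem_nhds hx] with t ht
      have h := hFdecomp (Function.update x N t) (memDN x t ht)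
      rw [Function.update_self, hSS_N] at h
      rw [h]
      ring
    show deriv (fun t => F (Function.update x N t)) (x N) = _
    rw [heqv.deriv_eq]
    have hxne : x N ≠ 0 := ne_of_gt hx
    have hd : HasDerivAt (fun t => psi t + SS x / t)
        (psi1 (x N) - SS x / (x N) ^ 2) (x N) := by
      have h2 := (hasDerivAt_const (x N) (SS x)).div (hasDerivAt_id (x N)) hxne
      have h := (hpsid (x N) hx).add h2
      refine h.congr_deriv (Eq.symm ?_)
      simp only [id_eq]
      field_simp
      ring
    exact hd.deriv
  have hpdN2F : ∀ x, x ∈ D → pd N (pd N F) x = psi2 (x N) + 2 * SS x / (x N) ^ 3 := by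
    intro x hx
    have heqv : (fun t => pd N F (Function.update x N t)) =ᶠ[nhds (x N)]
        fun t => psi1 t - SS x / t ^ 2 := by
      filter_upwards [Ioi_mem_nhds hx] with t ht
      have h := hpdNF (Function.update x N t) (memDN x t ht)
      rwa [Function.update_self, hSS_N] at h
    show deriv (fun t => pd N F (Function.update x N t)) (x N) = _
    rw [heqv.deriv_eq]
    have hxne : x N ≠ 0 := ne_of_gt hx
    have hd : HasDerivAt (fun t => psi1 t - SS x / t ^ 2)
        (psi2 (x N) + 2 * SS x / (x N) ^ 3) (x N) := by
      have h2 := (hasDerivAt_const (x N) (SS x)).div (hasDerivAt_pow 2 (x N))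
        (pow_ne_zero 2 hxne)
      have h := (hpsi1d (x N) hx).sub h2
      refine h.congr_deriv (Eq.symm ?_)
      field_simp
      ring
    exact hd.deriv
  have hpdiiF : ∀ i : Fin n, (i : ℕ) < n - 1 → ∀ x, x ∈ D →
      pd i (pd i F) x = a / x N := by
    intro i hi x hx
    have hiN := hne i hi
    have hfun : (fun t => pd i F (Function.update x i t))
        = fun t => (a * t + phi i 0) / x N := by
      funext t
      have hm := memD x hx i hiN t
      rw [hpdF_lin i hi _ hm, Function.update_self, hupN x i hiN t]
    show deriv (fun t => pd i F (Function.update x i t)) (x i) = a / x N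
    rw [hfun]
    have hd : HasDerivAt (fun t => (a * t + phi i 0) / x N) (a / x N) (x i) := by
      have h := (((hasDerivAt_id (x i)).const_mul a).add_const (phi i 0)).div_const (x N)
      refine h.congr_deriv (Eq.symm ?_)
      ring
    exact hd.deriv
  -- the ODE for psi
  have i00 : Fin n := Fin.castLE hle ⟨0, hn1⟩
  have hODE : ∀ t : ℝ, 0 < t → t * psi2 t + 2 * psi1 t = a := by
    intro t ht
    have hx : Function.update p N t ∈ D := memDN p t ht
    set x := Function.update p N t with hxdef
    have hxN : x N = t := Function.update_self _ _ _
    have hilt : ((Fin.castLE hle ⟨0, hn1⟩ : Fin n) : ℕ) < n - 1 := hn1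
    have e1 := h1' _ hilt x hx
    have e2 := h4' x hx
    rw [hpdiiF _ hilt x hx, hpdNF x hx, hxN] at e1
    rw [hpdN2F x hx, hpdNF x hx, hxN] at e2
    have hGx := hG0' x hx
    have h := sub_eq_zero.mpr (e1.trans e2.symm)
    rw [← mul_sub] at h
    have ht0 : t ≠ 0 := ne_of_gt ht
    rcases mul_eq_zero.mp h with h' | h'
    · exact absurd h' hGx
    · have h'' := sub_eq_zero.mp h'
      field_simp at h''
      have h9 : t ^ 9 * (a - 2 * psi1 t - t * psi2 t) = 0 := by linear_combination t ^ 7 * h''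
      have h6 := (mul_eq_zero.mp h9).resolve_left (pow_ne_zero 9 ht0)
      linarith
  -- solve the ODE
  let c : ℝ := a / 2 - psi1 1
  have hpsi1val : ∀ t : ℝ, 0 < t → psi1 t = a / 2 - c / t ^ 2 := by
    intro t ht
    have hq : ∀ u : ℝ, 0 < u →
        HasDerivAt (fun u => u ^ 2 * psi1 u - a / 2 * u ^ 2) 0 u := by
      intro u hu
      have h1 := (hasDerivAt_pow 2 u).mul (hpsi1d u hu)
      have h2 := (hasDerivAt_pow 2 u).const_mul (a / 2)
      have h3 := h1.sub h2
      refine h3.congr_deriv (Eq.symm ?_)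
      have hO := hODE u hu
      linear_combination (-u) * hO
    have h := Stmt9Aux.const_Ioi hq ht one_pos
    have ht0 : t ≠ 0 := ne_of_gt ht
    have hc1 : (1:ℝ) ^ 2 * psi1 1 - a / 2 * 1 ^ 2 = -c := by
      show (1:ℝ) ^ 2 * psi1 1 - a / 2 * 1 ^ 2 = -(a / 2 - psi1 1)
      ring
    rw [hc1] at h
    field_simp at h ⊢
    linarith
  let e : ℝ := psi 1 - (a / 2 + c)
  have hpsival : ∀ t : ℝ, 0 < t → psi t = a / 2 * t + c / t + e := by
    intro t ht
    have hr : ∀ u : ℝ, 0 < u →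
        HasDerivAt (fun u => psi u - (a / 2 * u + c / u)) 0 u := by
      intro u hu
      have hu0 : u ≠ 0 := ne_of_gt hu
      have h1 := hpsid u hu
      have h2 := ((hasDerivAt_id u).const_mul (a / 2)).add
        ((hasDerivAt_const u c).div (hasDerivAt_id u) hu0)
      have h3 := h1.sub h2
      refine h3.congr_deriv (Eq.symm ?_)
      simp only [id_eq]
      rw [hpsi1val u hu]
      field_simp
      ring
    have h := Stmt9Aux.const_Ioi hr ht one_pos
    have he : psi 1 - (a / 2 * 1 + c / 1) = e := by
      show _ = psi 1 - (a / 2 + c)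
      ring
    rw [he] at h
    linarith
  -- conclusion
  refine ⟨a, c, e, b, ?_⟩
  intro x hx
  have hxD : x ∈ D := hx
  have hxN : (0:ℝ) < x N := hx
  have hxne : x N ≠ 0 := ne_of_gt hxN
  constructor
  · show F x = (1 / x N) * SS x + a / 2 * x N + c / x N + e
    rw [hFdecomp x hxD, hpsival (x N) hxN]
    ring
  · show G x * (a / 2 * (x N) ^ 2 + c + SS x) = mu * x N
    have hilt : ((Fin.castLE hle ⟨0, hn1⟩ : Fin n) : ℕ) < n - 1 := hn1
    have e1 := h1' _ hilt x hxD
    rw [hpdiiF _ hilt x hxD, hpdNF x hxD, hpsi1val (x N) hxN] at e1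
    field_simp at e1
    have h5 : (x N) ^ 5 * (G x * (a * (x N) ^ 2 + 2 * c + 2 * SS x) - 2 * mu * x N) = 0 := by
      linear_combination (x N) ^ 5 * e1
    have h6 := (mul_eq_zero.mp h5).resolve_left (pow_ne_zero 5 hxne)
    linear_combination h6 / 2
end

section
/- Let a, b, c ∈ ℝ and define M, N : ℝ × (0,∞) → ℝ by M(x,y) = (a/2)(x² − y²) + bx + c and N(x,y) = axy + by. Then for all λ, ρ ∈ ℝ with λ = 2ρ − 1, the triple (M, N, λ) satisfies the Ricci–Bourguignon soliton system on the upper half-plane: ∂M/∂x(x,y) − N(x,y)/y = λ − 2ρ + 1, ∂M/∂y(x,y) + ∂N/∂x(x,y) = 0, and ∂N/∂y(x,y) − N(x,y)/y = λ − 2ρ + 1 for all (x,y) with y > 0; in particular the vector field X = M∂x + N∂y is a Killing field of the hyperbolic metric. -/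
/-!
`M + iN = (a/2) z² + b z + c` with `z = x + iy` is a polynomial with real coefficients, so `M` and
`N` satisfy the Cauchy–Riemann equations, and `N = y (a x + b)` gives `N / y = ∂N/∂y`. With
`λ = 2ρ - 1` the right-hand sides of the soliton system vanish, and what remains (the Killing
system) is exactly these identities.
-/

open Set

theorem pdx_eq_of_hasDerivAt {f : ℝ → ℝ → ℝ} {x y f' : ℝ}
    (h : HasDerivAt (fun t => f t y) f' x) : pdx f x y = f' :=
  h.deriv

theorem pdy_eq_of_hasDerivAt {f : ℝ → ℝ → ℝ} {x y f' : ℝ}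
    (h : HasDerivAt (fun t => f x t) f' y) : pdy f x y = f' :=
  h.deriv

/-- The Ricci–Bourguignon soliton system for `X = M ∂x + N ∂y` on the upper half-plane, with
`μ = λ - 2ρ + 1`; `μ = 0` is the Killing system. -/
def IsSolitonSystem (M N : ℝ → ℝ → ℝ) (μ : ℝ) : Prop :=
  ∀ x y : ℝ, 0 < y →
    pdx M x y - N x y / y = μ ∧ pdy M x y + pdx N x y = 0 ∧ pdy N x y - N x y / y = μ

section QuadraticField

variable {a b c : ℝ} {M N : ℝ → ℝ → ℝ}

theorem pdx_M_eq (hM : ∀ x y, M x y = a / 2 * (x ^ 2 - y ^ 2) + b * x + c) (x y : ℝ) :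
    pdx M x y = a * x + b := by
  refine pdx_eq_of_hasDerivAt ?_
  simp only [hM]
  exact (((hasDerivAt_pow 2 x).sub_const (y ^ 2)).const_mul (a / 2)).add
    ((hasDerivAt_id' x).const_mul b) |>.add_const c |>.congr_deriv (by ring)

theorem pdy_M_eq (hM : ∀ x y, M x y = a / 2 * (x ^ 2 - y ^ 2) + b * x + c) (x y : ℝ) :
    pdy M x y = -(a * y) := by
  refine pdy_eq_of_hasDerivAt ?_
  simp only [hM]
  exact (((hasDerivAt_pow 2 y).const_sub (x ^ 2)).const_mul (a / 2)).add_const (b * x)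
    |>.add_const c |>.congr_deriv (by ring)

theorem pdx_N_eq (hN : ∀ x y, N x y = a * x * y + b * y) (x y : ℝ) :
    pdx N x y = a * y := by
  refine pdx_eq_of_hasDerivAt ?_
  simp only [hN]
  exact (((hasDerivAt_id' x).const_mul a).mul_const y).add_const (b * y) |>.congr_deriv (by ring)

theorem pdy_N_eq (hN : ∀ x y, N x y = a * x * y + b * y) (x y : ℝ) :
    pdy N x y = a * x + b := by
  refine pdy_eq_of_hasDerivAt ?_
  simp only [hN]
  exact ((hasDerivAt_id' y).const_mul (a * x)).add ((hasDerivAt_id' y).const_mul b)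
    |>.congr_deriv (by ring)

theorem isSolitonSystem_zero (hM : ∀ x y, M x y = a / 2 * (x ^ 2 - y ^ 2) + b * x + c)
    (hN : ∀ x y, N x y = a * x * y + b * y) : IsSolitonSystem M N 0 := by
  intro x y hy
  have hNy : N x y / y = a * x + b := by
    rw [hN, div_eq_iff hy.ne']
    ring
  rw [pdx_M_eq hM, pdy_M_eq hM, pdx_N_eq hN, pdy_N_eq hN, hNy]
  exact ⟨sub_self _, neg_add_cancel _, sub_self _⟩

end QuadraticField

/-- converse direction implicit in Corollaries 3.4, 3.6 and 3.8: the explicit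
fields `M = (a/2)(x²-y²) + bx + c`, `N = axy + by` satisfy the Ricci–Bourguignon soliton system
with `λ = 2ρ - 1`; in particular `X = M∂x + N∂y` is Killing. -/
theorem stmt_15 (a b c : ℝ)
    (M N : ℝ → ℝ → ℝ)
    (hMdef : ∀ x y : ℝ, M x y = a / 2 * (x ^ 2 - y ^ 2) + b * x + c)
    (hNdef : ∀ x y : ℝ, N x y = a * x * y + b * y) :
    ∀ lam rho : ℝ, lam = 2 * rho - 1 →
      (∀ x y : ℝ, 0 < y →
        (pdx M x y - N x y / y = lam - 2 * rho + 1) ∧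
        (pdy M x y + pdx N x y = 0) ∧
        (pdy N x y - N x y / y = lam - 2 * rho + 1)) ∧
      (∀ x y : ℝ, 0 < y →
        pdx M x y - N x y / y = 0 ∧
        pdy M x y + pdx N x y = 0 ∧
        pdy N x y - N x y / y = 0) := by
  intro lam rho hlam
  have hμ : lam - 2 * rho + 1 = 0 := by linarith
  have hKilling : IsSolitonSystem M N 0 := isSolitonSystem_zero hMdef hNdef
  rw [hμ]
  exact ⟨hKilling, hKilling⟩
end
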